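/- arXiv:2311.01397 — 3 statements merged into one kernel-verified Lean document; each statement's English description precedes it below -/
import Mathlib

section
/- Let M be a matroid on a finite ground set E with no loops and no coloops. Then, as functions ℝ^E → ℤ, the indicator function of the base polytope P(M) equals the sum, over all chains C in the lattice of cyclic flats Z(M) that contain both the minimum 0_Z and the maximum 1_Z of Z(M), of λ_C times the indicator function of P(S_C), where λ_C = −μ(C, 1̂) is computed via the Möbius function μ of the cyclic chain lattice of M. -/
open scoped Classical

namespace GPoly

/-- A step of a Delannoy path: east `+(1,0)`, north `+(0,1)` or diagonal `+(1,1)`. -/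
inductive DStep : Type
  | east : DStep
  | north : DStep
  | diag : DStep
  deriving DecidableEq

/-- Horizontal displacement of a step. -/
def DStep.dx : DStep → ℕ
  | .east => 1
  | .north => 0
  | .diag => 1

/-- Vertical displacement of a step. -/
def DStep.dy : DStep → ℕ
  | .east => 0
  | .north => 1
  | .diag => 1

/-- Position reached after the first `k` steps of `P`, starting at the point `s`. -/
def pathPos (s : ℕ × ℕ) (P : List DStep) (k : ℕ) : ℕ × ℕ :=
  (s.1 + ((P.take k).map DStep.dx).sum, s.2 + ((P.take k).map DStep.dy).sum)

/-- The Gale order: `U ≤ B` iff the increasing enumerations satisfy `u_ℓ ≤ b_ℓ`. -/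
def galeLe {α : Type*} [LinearOrder α] (U B : Finset α) : Prop :=
  List.Forall₂ (· ≤ ·) (U.sort (· ≤ ·)) (B.sort (· ≤ ·))

/-- Bases of the Schubert matroid `SM(U)` of rank `r` on `[n] = {1, …, n}`:
all `r`-subsets `B` of `[n]` with `U ≤ B` in the Gale order. -/
noncomputable def schubertBases (n r : ℕ) (U : Finset ℕ) : Finset (Finset ℕ) :=
  (Finset.Icc 1 n).powerset.filter fun B => B.card = r ∧ galeLe U B

/-- The point `p` lies weakly below the lattice path `path(U)`. -/
def belowPath (U : Finset ℕ) (p : ℕ × ℕ) : Prop :=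
  p.2 ≤ (U ∩ Finset.Icc 1 (p.1 + p.2)).card

/-- `path(U)` traverses the vertical unit segment from `(x, y)` to `(x, y+1)`
(by its north step number `x + y + 1`). -/
def uVertSeg (U : Finset ℕ) (x y : ℕ) : Prop :=
  x + y + 1 ∈ U ∧ (U ∩ Finset.Icc 1 (x + y + 1)).card = y + 1

/-- A Delannoy path associated to `SM(U)`: starts at `(1,1)`, ends at `(n-r, r)` and
stays weakly below `path(U)`. -/
def IsDelannoy (n r : ℕ) (U : Finset ℕ) (P : List DStep) : Prop :=
  pathPos (1, 1) P P.length = (n - r, r) ∧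
    ∀ k ≤ P.length, belowPath U (pathPos (1, 1) P k)

/-- Admissible Delannoy path associated to `SM(U)`. -/
def IsAdmissible (n r : ℕ) (U : Finset ℕ) (P : List DStep) : Prop :=
  IsDelannoy n r U P ∧
    ∀ (k : ℕ) (h : k < P.length),
      (P.get ⟨k, h⟩ = DStep.north →
        pathPos (1, 1) P (k + 1) = (n - r, r) ∨
          ¬ uVertSeg U (pathPos (1, 1) P k).1 (pathPos (1, 1) P k).2) ∧
      (P.get ⟨k, h⟩ = DStep.diag →
        belowPath U ((pathPos (1, 1) P k).1, (pathPos (1, 1) P k).2 + 1) ∧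
          ¬ uVertSeg U (pathPos (1, 1) P k).1 (pathPos (1, 1) P k).2)

/-- Number of diagonal steps of a path. -/
def diagCount (P : List DStep) : ℕ := (P.filter (· = DStep.diag)).length

/-- The set of indices (0-based) of the diagonal steps of `P`. -/
def diagIndices (P : List DStep) : Finset ℕ :=
  (Finset.range P.length).filter fun k => P.getD k DStep.east = DStep.diag

/-- Replace a diagonal step by a north step followed by an east step. -/
def expandNE : DStep → List DStep
  | DStep.diag => [DStep.north, DStep.east]
  | s => [s]

/-- Replace a diagonal step by an east step followed by a north step. -/
def expandEN : DStep → List DStep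
  | DStep.diag => [DStep.east, DStep.north]
  | s => [s]

/-- The full lattice path of `B_P`: an east step, a north step, then the steps of `P`
with each diagonal step replaced by a north step immediately followed by an east step. -/
def fullPath (P : List DStep) : List DStep :=
  DStep.east :: DStep.north :: (P.map expandNE).flatten

/-- The subset of `[n]` whose `path` is the given (diagonal-free) list of steps:
the set of (1-based) positions of the north steps. -/
def northSet (L : List DStep) : Finset ℕ :=
  ((Finset.range L.length).filter fun k => L.getD k DStep.east = DStep.north).image (· + 1)

/-- The basis `B_P` associated to a Delannoy path `P`. -/
def delannoyBasis (P : List DStep) : Finset ℕ := northSet (fullPath P)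

/-! ### Matroid notions for a family of bases -/

/-- `S` is independent for the basis family `ℬ`: it is contained in some basis. -/
def famIndep (ℬ : Finset (Finset ℕ)) (S : Finset ℕ) : Prop := ∃ B ∈ ℬ, S ⊆ B

/-- `C` is a circuit for the basis family `ℬ`: a minimal dependent set. -/
def famCircuit (ℬ : Finset (Finset ℕ)) (C : Finset ℕ) : Prop :=
  ¬ famIndep ℬ C ∧ ∀ C' ⊂ C, famIndep ℬ C'

/-- The dual basis family on the ground set `E`: complements of bases. -/
noncomputable def famDual (E : Finset ℕ) (ℬ : Finset (Finset ℕ)) : Finset (Finset ℕ) :=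
  ℬ.image fun B => E \ B

/-- `e ∉ B` is externally active: `e` is the smallest element of the unique circuit
contained in `B ∪ {e}`. -/
def ExtActive (E : Finset ℕ) (ℬ : Finset (Finset ℕ)) (B : Finset ℕ) (e : ℕ) : Prop :=
  e ∈ E ∧ e ∉ B ∧
    ∃ C, C ⊆ insert e B ∧ famCircuit ℬ C ∧ e ∈ C ∧ ∀ x ∈ C, e ≤ x

/-- `i ∈ B` is internally active: `i` is the smallest element of the unique cocircuit
contained in `(E ∖ B) ∪ {i}`. -/
def IntActive (E : Finset ℕ) (ℬ : Finset (Finset ℕ)) (B : Finset ℕ) (i : ℕ) : Prop :=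
  i ∈ B ∧
    ∃ C, C ⊆ insert i (E \ B) ∧ famCircuit (famDual E ℬ) C ∧ i ∈ C ∧ ∀ x ∈ C, i ≤ x

/-- External activity `e(B)`. -/
noncomputable def extAct (E : Finset ℕ) (ℬ : Finset (Finset ℕ)) (B : Finset ℕ) : ℕ :=
  (E.filter (ExtActive E ℬ B)).card

/-- Internal activity `i(B)`. -/
noncomputable def intAct (E : Finset ℕ) (ℬ : Finset (Finset ℕ)) (B : Finset ℕ) : ℕ :=
  (E.filter (IntActive E ℬ B)).card

/-- The statistic `α(B)`: the number of `i ∈ B` such that `B' = (B ∖ {i}) ∪ {i+1}`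
is a basis with `e(B') = e(B)` and `i(B') = i(B)`. -/
noncomputable def alphaStat (E : Finset ℕ) (ℬ : Finset (Finset ℕ)) (B : Finset ℕ) : ℕ :=
  (B.filter fun i =>
    insert (i + 1) (B.erase i) ∈ ℬ ∧
      extAct E ℬ (insert (i + 1) (B.erase i)) = extAct E ℬ B ∧
      intAct E ℬ (insert (i + 1) (B.erase i)) = intAct E ℬ B).card

/-- The rank function determined by a family of bases. -/
noncomputable def famRank (ℬ : Finset (Finset ℕ)) (A : Finset ℕ) : ℕ :=
  ℬ.sup fun B => (A ∩ B).card

/-- The β-invariant: `β(M) = (−1)^{rk(E)} Σ_{A ⊆ E} (−1)^{|A|} rk(A)`. -/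
noncomputable def betaInv (E : Finset ℕ) (ℬ : Finset (Finset ℕ)) : ℤ :=
  (-1) ^ famRank ℬ E * ∑ A ∈ E.powerset, (-1) ^ A.card * (famRank ℬ A : ℤ)

/-- `ℬ` is the collection of bases of a matroid with ground set `E`:
it is a nonempty family of subsets of `E` satisfying the basis exchange property. -/
def IsBasisFamily (E : Finset ℕ) (ℬ : Finset (Finset ℕ)) : Prop :=
  ℬ.Nonempty ∧ (∀ B ∈ ℬ, B ⊆ E) ∧
    ∀ B₁ ∈ ℬ, ∀ B₂ ∈ ℬ, ∀ x ∈ B₁ \ B₂, ∃ y ∈ B₂ \ B₁, insert y (B₁.erase x) ∈ ℬ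

/-- Two elements lie in a common component: they are equal or in a common circuit. -/
def connRel (ℬ : Finset (Finset ℕ)) (e f : ℕ) : Prop :=
  e = f ∨ ∃ C, famCircuit ℬ C ∧ e ∈ C ∧ f ∈ C

/-- The number of connected components of the matroid with bases `ℬ` on `E`. -/
noncomputable def numComponents (E : Finset ℕ) (ℬ : Finset (Finset ℕ)) : ℕ :=
  Set.ncard {S : Set ℕ | ∃ e ∈ E, S = {f | f ∈ E ∧ Relation.EqvGen (connRel ℬ) e f}}

/-- The matroid with bases `ℬ` on ground set `E` is connected. -/
def IsConnectedFam (E : Finset ℕ) (ℬ : Finset (Finset ℕ)) : Prop :=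
  E.Nonempty ∧ ∀ e ∈ E, ∀ f ∈ E, Relation.EqvGen (connRel ℬ) e f

/-- Series-parallel matroid: isomorphic to `U_{0,1}` or `U_{1,1}`
(a single loop or a single coloop), or connected with β-invariant `1`. -/
def IsSeriesParallel (E : Finset ℕ) (ℬ : Finset (Finset ℕ)) : Prop :=
  (E.card = 1 ∧ (ℬ = {∅} ∨ ℬ = {E})) ∨ (IsConnectedFam E ℬ ∧ betaInv E ℬ = 1)

/-- The bases of the restriction of the matroid with bases `ℬ` to the set `F`:
the maximal intersections of bases with `F`. -/
noncomputable def famRestrict (ℬ : Finset (Finset ℕ)) (F : Finset ℕ) : Finset (Finset ℕ) :=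
  (ℬ.image (· ∩ F)).filter fun S => ∀ T ∈ ℬ.image (· ∩ F), S ⊆ T → S = T

/-- The matroid with bases `ℬ` on `E` is a direct sum of series-parallel matroids. -/
def IsDirectSumOfSeriesParallel (E : Finset ℕ) (ℬ : Finset (Finset ℕ)) : Prop :=
  ∃ parts : Finset (Finset ℕ),
    (↑parts : Set (Finset ℕ)).PairwiseDisjoint id ∧
    parts.sup id = E ∧
    (∀ S ∈ parts, IsSeriesParallel S (famRestrict ℬ S)) ∧
    ℬ = E.powerset.filter fun B => ∀ S ∈ parts, B ∩ S ∈ famRestrict ℬ S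

/-! ### Base polytopes -/

/-- The indicator vector of `B ⊆ E`, as a point of `ℝ^E`. -/
noncomputable def basisVector (E : Finset ℕ) (B : Finset ℕ) : ↑E → ℝ :=
  fun e => if (e : ℕ) ∈ B then 1 else 0

/-- The base polytope of the matroid with bases `ℬ` on `E`:
the convex hull in `ℝ^E` of the indicator vectors of the bases. -/
noncomputable def basePolytope (E : Finset ℕ) (ℬ : Finset (Finset ℕ)) : Set (↑E → ℝ) :=
  convexHull ℝ (basisVector E '' (↑ℬ : Set (Finset ℕ)))

/-- The indicator function `ℝ^E → ℤ` of the base polytope. -/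
noncomputable def polyInd (E : Finset ℕ) (ℬ : Finset (Finset ℕ)) : (↑E → ℝ) → ℤ :=
  fun x => if x ∈ basePolytope E ℬ then 1 else 0

/-- The indicator function `ℝ^E → ℤ` of the relative interior of the base polytope. -/
noncomputable def relintInd (E : Finset ℕ) (ℬ : Finset (Finset ℕ)) : (↑E → ℝ) → ℤ :=
  fun x => if x ∈ intrinsicInterior ℝ (basePolytope E ℬ) then 1 else 0

/-! ### Cyclic flats and the cyclic chain lattice -/

/-- `F` is a flat of the matroid with bases `ℬ` on `E`. -/
def IsFlat (E : Finset ℕ) (ℬ : Finset (Finset ℕ)) (F : Finset ℕ) : Prop :=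
  F ⊆ E ∧ ∀ e ∈ E, famRank ℬ (insert e F) = famRank ℬ F → e ∈ F

/-- `F` is a cyclic flat: a flat whose restriction has no coloops. -/
def IsCyclicFlat (E : Finset ℕ) (ℬ : Finset (Finset ℕ)) (F : Finset ℕ) : Prop :=
  IsFlat E ℬ F ∧ ∀ e ∈ F, ¬ (∀ S ∈ famRestrict ℬ F, e ∈ S)

/-- The set of cyclic flats. -/
noncomputable def cyclicFlats (E : Finset ℕ) (ℬ : Finset (Finset ℕ)) : Finset (Finset ℕ) :=
  E.powerset.filter (IsCyclicFlat E ℬ)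

/-- A chain of cyclic flats containing the minimum and maximum of the lattice of
cyclic flats; these are the elements (other than the top `1̂`) of the cyclic
chain lattice. -/
def IsCyclicChain (E : Finset ℕ) (ℬ : Finset (Finset ℕ)) (C : Finset (Finset ℕ)) : Prop :=
  ↑C ⊆ (cyclicFlats E ℬ : Set (Finset ℕ)) ∧ IsChain (· ⊆ ·) (↑C : Set (Finset ℕ)) ∧
    (∃ F ∈ C, ∀ G ∈ cyclicFlats E ℬ, F ⊆ G) ∧
    (∃ F ∈ C, ∀ G ∈ cyclicFlats E ℬ, G ⊆ F)

/-- The set of chains of cyclic flats containing the minimum and the maximum. -/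
noncomputable def cyclicChains (E : Finset ℕ) (ℬ : Finset (Finset ℕ)) :
    Finset (Finset (Finset ℕ)) :=
  (cyclicFlats E ℬ).powerset.filter (IsCyclicChain E ℬ)

/-- The rank function `A ↦ min_{Z ∈ C} (rk_M(Z) + |A ∖ Z|)` associated to a chain `C`. -/
noncomputable def chainRank (ℬ : Finset (Finset ℕ)) (C : Finset (Finset ℕ))
    (A : Finset ℕ) : ℕ :=
  if h : C.Nonempty then C.inf' h fun Z => famRank ℬ Z + (A \ Z).card else A.card

/-- The bases of the matroid on `E` with rank function `rk`:
the subsets `B ⊆ E` with `rk B = |B| = rk E`. -/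
noncomputable def basesOfRank (E : Finset ℕ) (rk : Finset ℕ → ℕ) : Finset (Finset ℕ) :=
  E.powerset.filter fun B => rk B = B.card ∧ rk B = rk E

/-- The bases of the Schubert matroid `S_C` associated to a chain `C` of cyclic flats. -/
noncomputable def chainSchubert (E : Finset ℕ) (ℬ : Finset (Finset ℕ))
    (C : Finset (Finset ℕ)) : Finset (Finset ℕ) :=
  basesOfRank E (chainRank ℬ C)

/-- The point reached by `path(S)` after `k` steps. -/
def pathPoint (S : Finset ℕ) (k : ℕ) : ℕ × ℕ :=
  (k - (S ∩ Finset.Icc 1 k).card, (S ∩ Finset.Icc 1 k).card)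

/-!
By Edmonds' theorem the base polytope of a matroid with rank function `rk` is
`{x ∈ [0,1]^E | x(E) = rk E, x(A) ≤ rk A for all A}`: its extreme points are integral, since two
fractional coordinates that no tight set separates could be shifted against each other. For `M`
the inequalities of cyclic flats suffice, because the excess `x(A) - rk A` of any set is dominated
by that of the closure of its cyclic core; for `S_C` those of the members of `C` suffice.
Intervals of the cyclic chain lattice below `1̂` are Boolean, so
`λ_C = ∑_{D ⊇ C} (-1)^{|D ∖ C|}`, and for fixed `x` inclusion–exclusion collapses the right-hand
side to the signed count of chains of cyclic flats violated by `x`. That count is `1` when nothing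
is violated and `0` otherwise: toggling the join `cl(a ∪ t)` with the most violated flat `t` is a
sign-reversing involution on these chains.
-/

open Finset

section Rank

variable {E : Finset ℕ} {ℬ : Finset (Finset ℕ)}

theorem IsBasisFamily.exchangeProperty (hM : IsBasisFamily E ℬ) :
    Matroid.ExchangeProperty fun S : Set ℕ => ∃ B ∈ ℬ, (B : Set ℕ) = S := by
  rintro _ _ ⟨B₁, hB₁, rfl⟩ ⟨B₂, hB₂, rfl⟩ a ha
  obtain ⟨b, hb, hB⟩ := hM.2.2 B₁ hB₁ B₂ hB₂ a (by exact_mod_cast ha)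
  exact ⟨b, by exact_mod_cast hb, _, hB, by push_cast; rfl⟩

noncomputable def IsBasisFamily.toMatroid (hM : IsBasisFamily E ℬ) : Matroid ℕ :=
  Matroid.ofIsBaseOfFinite E.finite_toSet (fun S => ∃ B ∈ ℬ, (B : Set ℕ) = S)
    (let ⟨B, hB⟩ := hM.1; ⟨B, B, hB, rfl⟩) hM.exchangeProperty
    (by rintro _ ⟨B, hB, rfl⟩; exact_mod_cast hM.2.1 B hB)

theorem IsBasisFamily.toMatroid_isBase (hM : IsBasisFamily E ℬ) {B : Finset ℕ} :
    hM.toMatroid.IsBase B ↔ B ∈ ℬ := by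
  simp [IsBasisFamily.toMatroid]

theorem IsBasisFamily.toMatroid_indep (hM : IsBasisFamily E ℬ) {I : Finset ℕ} :
    hM.toMatroid.Indep I ↔ famIndep ℬ I := by
  simp only [Matroid.indep_iff, famIndep, IsBasisFamily.toMatroid, Matroid.ofIsBaseOfFinite_isBase]
  constructor
  · rintro ⟨_, ⟨B, hB, rfl⟩, hIB⟩
    exact ⟨B, hB, by exact_mod_cast hIB⟩
  · rintro ⟨B, hB, hIB⟩
    exact ⟨B, ⟨B, hB, rfl⟩, by exact_mod_cast hIB⟩

theorem card_inter_le_famRank {A B : Finset ℕ} (hB : B ∈ ℬ) : #(A ∩ B) ≤ famRank ℬ A :=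
  Finset.le_sup (f := fun B => #(A ∩ B)) hB

theorem exists_card_inter_eq_famRank (hℬ : ℬ.Nonempty) (A : Finset ℕ) :
    ∃ B ∈ ℬ, #(A ∩ B) = famRank ℬ A := by
  obtain ⟨B, hB, h⟩ := Finset.exists_mem_eq_sup ℬ hℬ fun B => #(A ∩ B)
  exact ⟨B, hB, h.symm⟩

theorem IsBasisFamily.famRank_eq_eRk (hM : IsBasisFamily E ℬ) (A : Finset ℕ) :
    (famRank ℬ A : ℕ∞) = hM.toMatroid.eRk A := by
  apply le_antisymm
  · obtain ⟨B, hB, hAB⟩ := exists_card_inter_eq_famRank hM.1 A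
    rw [← hAB, ← Set.encard_coe_eq_coe_finsetCard]
    exact (hM.toMatroid_indep.2 ⟨B, hB, inter_subset_right⟩).encard_le_eRk_of_subset
      (by simp)
  · obtain ⟨I, hI⟩ := hM.toMatroid.exists_isBasis' A
    lift I to Finset ℕ using (A.finite_toSet.subset hI.subset)
    obtain ⟨B, hB, hIB⟩ := hM.toMatroid_indep.1 hI.indep
    rw [← hI.encard_eq_eRk, Set.encard_coe_eq_coe_finsetCard, Nat.cast_le]
    exact (card_le_card (subset_inter (by exact_mod_cast hI.subset) hIB)).trans
      (card_inter_le_famRank hB)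


theorem famRank_mono {A A' : Finset ℕ} (h : A ⊆ A') : famRank ℬ A ≤ famRank ℬ A' :=
  Finset.sup_mono_fun fun _ _ => card_le_card (inter_subset_inter_right h)

theorem famRank_le_card (A : Finset ℕ) : famRank ℬ A ≤ #A :=
  Finset.sup_le fun _ _ => card_le_card inter_subset_left

theorem IsBasisFamily.famRank_union_add_famRank_inter_le (hM : IsBasisFamily E ℬ)
    (A B : Finset ℕ) : famRank ℬ (A ∪ B) + famRank ℬ (A ∩ B) ≤ famRank ℬ A + famRank ℬ B := by
  have h := hM.toMatroid.eRk_inter_add_eRk_union_le A B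
  rw [← coe_inter, ← coe_union] at h
  simp only [← hM.famRank_eq_eRk] at h
  exact_mod_cast (add_comm _ _).trans_le h

theorem IsBasisFamily.famRank_union_le (hM : IsBasisFamily E ℬ) (A S : Finset ℕ) :
    famRank ℬ (A ∪ S) ≤ famRank ℬ A + #S := by
  have h := hM.toMatroid.eRk_union_le_eRk_add_encard A S
  rw [← coe_union, Set.encard_coe_eq_coe_finsetCard] at h
  simp only [← hM.famRank_eq_eRk] at h
  exact_mod_cast h

theorem IsBasisFamily.famRank_eq_card (hM : IsBasisFamily E ℬ) {B : Finset ℕ} (hB : B ∈ ℬ) :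
    famRank ℬ E = #B := by
  have h := (hM.toMatroid_isBase.2 hB).encard_eq_eRank
  rw [Matroid.eRank_def, Set.encard_coe_eq_coe_finsetCard] at h
  exact_mod_cast ((hM.famRank_eq_eRk E).trans h.symm)

theorem IsBasisFamily.exists_card_inter_eq_famRank_of_subset (hM : IsBasisFamily E ℬ)
    {I F : Finset ℕ} (hI : famIndep ℬ I) (hIF : I ⊆ F) :
    ∃ B ∈ ℬ, I ⊆ B ∧ #(F ∩ B) = famRank ℬ F := by
  obtain ⟨J, hJ, hIJ⟩ := (hM.toMatroid_indep.2 hI).subset_isBasis'_of_subset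
    (coe_subset.2 hIF)
  lift J to Finset ℕ using F.finite_toSet.subset hJ.subset
  obtain ⟨B, hB, hJB⟩ := hM.toMatroid_indep.1 hJ.indep
  refine ⟨B, hB, (coe_subset.1 hIJ).trans hJB, le_antisymm (card_inter_le_famRank hB) ?_⟩
  have hJF : (#J : ℕ∞) = famRank ℬ F := by
    rw [hM.famRank_eq_eRk, ← hJ.encard_eq_eRk, Set.encard_coe_eq_coe_finsetCard]
  rw [← Nat.cast_inj.1 hJF]
  exact card_le_card (subset_inter (coe_subset.1 hJ.subset) hJB)

theorem IsBasisFamily.famRank_insert_eq_of_subset (hM : IsBasisFamily E ℬ) {A U : Finset ℕ}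
    {e : ℕ} (hAU : A ⊆ U) (he : famRank ℬ (insert e A) = famRank ℬ A) :
    famRank ℬ (insert e U) = famRank ℬ U := by
  have h := hM.famRank_union_add_famRank_inter_le (insert e A) U
  rw [insert_union, union_eq_right.2 hAU] at h
  have : famRank ℬ A ≤ famRank ℬ (insert e A ∩ U) :=
    famRank_mono (subset_inter (subset_insert e A) hAU)
  have : famRank ℬ U ≤ famRank ℬ (insert e U) := famRank_mono (subset_insert e U)
  omega

end Rank

section CyclicFlats

variable {E : Finset ℕ} {ℬ : Finset (Finset ℕ)}

noncomputable def famClosure (E : Finset ℕ) (ℬ : Finset (Finset ℕ)) (A : Finset ℕ) :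
    Finset ℕ :=
  A ∪ E.filter fun e => famRank ℬ (insert e A) = famRank ℬ A

theorem subset_famClosure (A : Finset ℕ) : A ⊆ famClosure E ℬ A := subset_union_left

theorem IsBasisFamily.famRank_famClosure (hM : IsBasisFamily E ℬ) (A : Finset ℕ) :
    famRank ℬ (famClosure E ℬ A) = famRank ℬ A := by
  have h := hM.toMatroid.eRk_eq_of_eRk_insert_le_forall
    (coe_subset.2 (subset_famClosure (E := E) (ℬ := ℬ) A)) fun e ⟨he, heA⟩ => by
      rw [mem_coe, famClosure, mem_union, mem_filter] at he
      have he' := (he.resolve_left heA).2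
      rw [← coe_insert, ← hM.famRank_eq_eRk, ← hM.famRank_eq_eRk, he']
  simp only [← hM.famRank_eq_eRk] at h
  exact_mod_cast h.symm

theorem IsBasisFamily.isFlat_famClosure (hM : IsBasisFamily E ℬ) {A : Finset ℕ} (hA : A ⊆ E) :
    IsFlat E ℬ (famClosure E ℬ A) := by
  refine ⟨union_subset hA (filter_subset _ _), fun e he hrk => mem_union_right _ ?_⟩
  refine mem_filter.2 ⟨he, le_antisymm ?_ (famRank_mono (subset_insert e A))⟩
  calc famRank ℬ (insert e A) ≤ famRank ℬ (insert e (famClosure E ℬ A)) :=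
        famRank_mono (insert_subset_insert e (subset_famClosure A))
    _ = famRank ℬ A := by rw [hrk, hM.famRank_famClosure]

theorem IsBasisFamily.famClosure_subset_of_isFlat (hM : IsBasisFamily E ℬ) {A U : Finset ℕ}
    (hU : IsFlat E ℬ U) (hAU : A ⊆ U) : famClosure E ℬ A ⊆ U := by
  refine union_subset hAU fun e he => ?_
  obtain ⟨heE, he⟩ := mem_filter.1 he
  exact hU.2 e heE (hM.famRank_insert_eq_of_subset hAU he)

def IsCyclic (ℬ : Finset (Finset ℕ)) (S : Finset ℕ) : Prop :=
  ∀ e ∈ S, famRank ℬ (S.erase e) = famRank ℬ S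

theorem IsBasisFamily.famRank_erase_eq_of_subset (hM : IsBasisFamily E ℬ) {S U : Finset ℕ}
    {e : ℕ} (hSU : S ⊆ U) (he : e ∈ S) (hrk : famRank ℬ (S.erase e) = famRank ℬ S) :
    famRank ℬ (U.erase e) = famRank ℬ U := by
  have h := hM.famRank_insert_eq_of_subset (erase_subset_erase e hSU) (e := e)
    (by rw [insert_erase he, hrk])
  rwa [insert_erase (hSU he), eq_comm] at h

theorem IsBasisFamily.isCyclic_union (hM : IsBasisFamily E ℬ) {S T : Finset ℕ}
    (hS : IsCyclic ℬ S) (hT : IsCyclic ℬ T) : IsCyclic ℬ (S ∪ T) := by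
  intro e he
  rcases mem_union.1 he with he | he
  · exact hM.famRank_erase_eq_of_subset subset_union_left he (hS e he)
  · exact hM.famRank_erase_eq_of_subset subset_union_right he (hT e he)

theorem IsBasisFamily.isCyclic_famClosure (hM : IsBasisFamily E ℬ) {S : Finset ℕ}
    (hS : IsCyclic ℬ S) : IsCyclic ℬ (famClosure E ℬ S) := by
  intro e _
  have hSe : famRank ℬ (S.erase e) = famRank ℬ S := by
    by_cases he : e ∈ S
    · exact hS e he
    · rw [erase_eq_of_notMem he]
  refine le_antisymm (famRank_mono (erase_subset e _)) ?_
  rw [hM.famRank_famClosure, ← hSe]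
  exact famRank_mono (erase_subset_erase e (subset_famClosure S))

theorem exists_isCyclic_subset (A : Finset ℕ) :
    ∃ m ⊆ A, IsCyclic ℬ m ∧ famRank ℬ m + #(A \ m) ≤ famRank ℬ A := by
  induction A using Finset.strongInduction with
  | H A ih =>
  by_cases hA : IsCyclic ℬ A
  · exact ⟨A, subset_rfl, hA, by simp⟩
  obtain ⟨e, heA, he⟩ : ∃ e ∈ A, famRank ℬ (A.erase e) ≠ famRank ℬ A := by
    simpa [IsCyclic] using hA
  obtain ⟨m, hmA, hm, hrk⟩ := ih (A.erase e) (erase_ssubset heA)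
  refine ⟨m, hmA.trans (erase_subset e A), hm, ?_⟩
  have hlt : famRank ℬ (A.erase e) < famRank ℬ A :=
    (famRank_mono (erase_subset e A)).lt_of_ne he
  have hem : e ∈ A \ m := mem_sdiff.2 ⟨heA, fun h => by simpa using hmA h⟩
  have hcard : #(A.erase e \ m) + 1 = #(A \ m) := by
    rw [erase_sdiff_comm, card_erase_add_one hem]
  omega

theorem IsBasisFamily.exists_notMem_famRestrict_iff (hM : IsBasisFamily E ℬ)
    {F : Finset ℕ} {e : ℕ} :
    (∃ S ∈ famRestrict ℬ F, e ∉ S) ↔ famRank ℬ (F.erase e) = famRank ℬ F := by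
  constructor
  · rintro ⟨S, hS, heS⟩
    obtain ⟨hS, hmax⟩ := mem_filter.1 hS
    obtain ⟨B, hB, rfl⟩ := mem_image.1 hS
    obtain ⟨B', hB', hBB', hcard⟩ := hM.exists_card_inter_eq_famRank_of_subset
      ⟨B, hB, inter_subset_left⟩ (inter_subset_right (s₁ := B))
    have hBF : B ∩ F = B' ∩ F :=
      hmax _ (mem_image_of_mem _ hB') (subset_inter hBB' inter_subset_right)
    have heB' : e ∉ F ∩ B' := by rwa [inter_comm, ← hBF]
    refine le_antisymm (famRank_mono (erase_subset e F)) ?_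
    calc famRank ℬ F = #(F.erase e ∩ B') := by rw [erase_inter, erase_eq_of_notMem heB', hcard]
      _ ≤ famRank ℬ (F.erase e) := card_inter_le_famRank hB'
  · intro hrk
    obtain ⟨B, hB, hcard⟩ := exists_card_inter_eq_famRank hM.1 (F.erase e)
    have hsub : F.erase e ∩ B ⊆ F ∩ B := inter_subset_inter_right (erase_subset e F)
    have hBF : F.erase e ∩ B = F ∩ B := eq_of_subset_of_card_le hsub
      (by rw [hcard, hrk]; exact card_inter_le_famRank hB)
    refine ⟨B ∩ F, mem_filter.2 ⟨mem_image_of_mem _ hB, ?_⟩, ?_⟩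
    · rintro _ hT hBT
      obtain ⟨B', hB', rfl⟩ := mem_image.1 hT
      refine eq_of_subset_of_card_le hBT ?_
      rw [inter_comm B, ← hBF, hcard, hrk, inter_comm]
      exact card_inter_le_famRank hB'
    · rw [inter_comm, ← hBF]
      simp

theorem subset_of_mem_cyclicFlats {Z : Finset ℕ} (hZ : Z ∈ cyclicFlats E ℬ) : Z ⊆ E :=
  mem_powerset.1 (filter_subset _ _ hZ)

theorem IsBasisFamily.mem_cyclicFlats_iff (hM : IsBasisFamily E ℬ) {F : Finset ℕ} :
    F ∈ cyclicFlats E ℬ ↔ IsFlat E ℬ F ∧ IsCyclic ℬ F := by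
  simp only [cyclicFlats, IsCyclicFlat, mem_filter, mem_powerset, not_forall, exists_prop,
    hM.exists_notMem_famRestrict_iff, IsCyclic]
  exact ⟨fun h => h.2, fun h => ⟨h.1.1, h⟩⟩

theorem IsBasisFamily.empty_mem_cyclicFlats (hM : IsBasisFamily E ℬ)
    (hloopless : ∀ e ∈ E, ∃ B ∈ ℬ, e ∈ B) : ∅ ∈ cyclicFlats E ℬ := by
  refine hM.mem_cyclicFlats_iff.2 ⟨⟨empty_subset E, fun e he hrk => ?_⟩, by simp [IsCyclic]⟩
  obtain ⟨B, hB, heB⟩ := hloopless e he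
  have h1 : 1 ≤ famRank ℬ {e} := by
    simpa [heB] using card_inter_le_famRank (A := {e}) hB
  have h0 := famRank_le_card (ℬ := ℬ) ∅
  simp_all

theorem IsBasisFamily.ground_mem_cyclicFlats (hM : IsBasisFamily E ℬ)
    (hcoloopless : ∀ e ∈ E, ∃ B ∈ ℬ, e ∉ B) : E ∈ cyclicFlats E ℬ := by
  refine hM.mem_cyclicFlats_iff.2 ⟨⟨subset_rfl, fun e he _ => he⟩, fun e he => ?_⟩
  obtain ⟨B, hB, heB⟩ := hcoloopless e he
  refine le_antisymm (famRank_mono (erase_subset e E)) ?_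
  calc famRank ℬ E = #(E.erase e ∩ B) := by
        rw [erase_inter, inter_eq_right.2 (hM.2.1 B hB), erase_eq_of_notMem heB,
          hM.famRank_eq_card hB]
    _ ≤ famRank ℬ (E.erase e) := card_inter_le_famRank hB

end CyclicFlats

section Polyhedron

variable {E : Finset ℕ}

noncomputable def weight (E A : Finset ℕ) : (↑E → ℝ) →ₗ[ℝ] ℝ :=
  ∑ e : ↥E with ↑e ∈ A, LinearMap.proj e

theorem weight_apply (A : Finset ℕ) (x : ↑E → ℝ) :
    weight E A x = ∑ e : ↥E with ↑e ∈ A, x e := by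
  simp [weight]

theorem weight_union_add_weight_inter (A B : Finset ℕ) (x : ↑E → ℝ) :
    weight E (A ∪ B) x + weight E (A ∩ B) x = weight E A x + weight E B x := by
  simp only [weight_apply, mem_union, mem_inter, filter_or, filter_and]
  exact sum_union_inter

theorem weight_add_weight_sdiff {A B : Finset ℕ} (hBA : B ⊆ A) (x : ↑E → ℝ) :
    weight E B x + weight E (A \ B) x = weight E A x := by
  have h := weight_union_add_weight_inter B (A \ B) x
  rw [union_sdiff_of_subset hBA, inter_sdiff_self] at h
  simpa [weight_apply] using h.symm

theorem weight_mono {x : ↑E → ℝ} (hx : 0 ≤ x) {A B : Finset ℕ} (hAB : A ⊆ B) :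
    weight E A x ≤ weight E B x := by
  simp only [weight_apply]
  exact sum_le_sum_of_subset_of_nonneg (monotone_filter_right _ fun _ _ h => hAB h)
    fun e _ _ => hx e

theorem card_filter_coe_mem (A : Finset ℕ) : #{e : ↥E | ↑e ∈ A} = #(E ∩ A) := by
  rw [← card_map (Function.Embedding.subtype _)]
  congr 1
  ext n
  simp [and_comm]

theorem weight_le_card {x : ↑E → ℝ} (hx : x ≤ 1) (A : Finset ℕ) : weight E A x ≤ #A := by
  calc weight E A x ≤ ∑ e : ↥E with ↑e ∈ A, (1 : ℝ) := by
        rw [weight_apply]; exact sum_le_sum fun e _ => hx e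
    _ ≤ #A := by
        rw [sum_const, nsmul_one, card_filter_coe_mem]
        exact_mod_cast card_le_card inter_subset_right

theorem weight_basisVector {B : Finset ℕ} (A : Finset ℕ) (hB : B ⊆ E) :
    weight E A (basisVector E B) = #(A ∩ B) := by
  simp only [weight_apply, basisVector, sum_boole, filter_filter, ← mem_inter]
  rw [card_filter_coe_mem, inter_eq_right.2 (inter_subset_right.trans hB)]

theorem weight_single (A : Finset ℕ) (i : E) :
    weight E A (Pi.single i 1) = if (i : ℕ) ∈ A then 1 else 0 := by
  simp [weight_apply, sum_pi_single']

variable {rk : Finset ℕ → ℕ}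

structure IsMatroidRank (rk : Finset ℕ → ℕ) : Prop where
  le_card : ∀ A, rk A ≤ #A
  mono : Monotone rk
  union_add_inter_le : ∀ A B, rk (A ∪ B) + rk (A ∩ B) ≤ rk A + rk B

theorem IsMatroidRank.eq_card_of_subset (hrk : IsMatroidRank rk) {B S : Finset ℕ}
    (hB : rk B = #B) (hSB : S ⊆ B) : rk S = #S := by
  have h := hrk.union_add_inter_le S (B \ S)
  rw [union_sdiff_of_subset hSB, inter_sdiff_self] at h
  have := hrk.le_card S
  have := hrk.le_card (B \ S)
  have := card_sdiff_add_card_eq_card hSB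
  omega

def basePolyhedron (E : Finset ℕ) (rk : Finset ℕ → ℕ) : Set (↑E → ℝ) :=
  {x | x ∈ Set.Icc 0 1 ∧ weight E E x = rk E ∧ ∀ A ⊆ E, weight E A x ≤ rk A}

theorem basisVector_mem_basePolyhedron (hrk : IsMatroidRank rk) {B : Finset ℕ}
    (hB : B ∈ basesOfRank E rk) : basisVector E B ∈ basePolyhedron E rk := by
  obtain ⟨hBE, hBcard, hBE'⟩ := by simpa [basesOfRank] using hB
  refine ⟨⟨fun e => ?_, fun e => ?_⟩, ?_, fun A hA => ?_⟩
  · unfold basisVector; split_ifs <;> norm_num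
  · unfold basisVector; split_ifs <;> norm_num
  · rw [weight_basisVector E hBE, inter_eq_right.2 hBE, ← hBE', hBcard]
  · rw [weight_basisVector A hBE, ← hrk.eq_card_of_subset hBcard inter_subset_right]
    exact_mod_cast hrk.mono inter_subset_left

theorem convex_basePolyhedron (E : Finset ℕ) (rk : Finset ℕ → ℕ) :
    Convex ℝ (basePolyhedron E rk) := by
  intro x hx y hy a b ha hb hab
  have hr : ∀ r : ℝ, a * r + b * r = r := fun r => by rw [← add_mul, hab, one_mul]
  refine ⟨convex_Icc 0 1 hx.1 hy.1 ha hb hab, ?_, fun A hA => ?_⟩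
  · simp only [map_add, map_smul, smul_eq_mul, hx.2.1, hy.2.1, hr]
  · simp only [map_add, map_smul, smul_eq_mul]
    have := mul_le_mul_of_nonneg_left (hx.2.2 A hA) ha
    have := mul_le_mul_of_nonneg_left (hy.2.2 A hA) hb
    linarith [hr (rk A)]

theorem isCompact_basePolyhedron (E : Finset ℕ) (rk : Finset ℕ → ℕ) :
    IsCompact (basePolyhedron E rk) := by
  have hw : ∀ A, Continuous (weight E A) := fun A => (weight E A).continuous_of_finiteDimensional
  have hclosed : IsClosed (basePolyhedron E rk) := by
    simp only [basePolyhedron, Set.ofPred_and, Set.ofPred_forall, Set.ofPred_mem_eq]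
    exact isClosed_Icc.inter ((isClosed_eq (hw E) continuous_const).inter
      (isClosed_iInter fun A => isClosed_iInter fun _ => isClosed_le (hw A) continuous_const))
  exact isCompact_Icc.of_isClosed_subset hclosed fun x hx => hx.1

theorem IsMatroidRank.basePolytope_subset (hrk : IsMatroidRank rk) :
    basePolytope E (basesOfRank E rk) ⊆ basePolyhedron E rk :=
  convexHull_min (by rintro _ ⟨B, hB, rfl⟩; exact basisVector_mem_basePolyhedron hrk hB)
    (convex_basePolyhedron E rk)

end Polyhedron

section Integrality

open Filter Topology

variable {E : Finset ℕ} {rk : Finset ℕ → ℕ} {x : ↑E → ℝ}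

theorem IsMatroidRank.weight_inter_eq (hrk : IsMatroidRank rk) (hx : x ∈ basePolyhedron E rk)
    {A B : Finset ℕ} (hA : A ⊆ E) (hB : B ⊆ E) (htA : weight E A x = rk A)
    (htB : weight E B x = rk B) : weight E (A ∩ B) x = rk (A ∩ B) := by
  have h1 := hx.2.2 (A ∪ B) (union_subset hA hB)
  have h2 := hx.2.2 (A ∩ B) (inter_subset_left.trans hA)
  have h3 := weight_union_add_weight_inter A B x
  have h4 : (rk (A ∪ B) + rk (A ∩ B) : ℝ) ≤ rk A + rk B := by
    exact_mod_cast hrk.union_add_inter_le A B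
  linarith

theorem exists_ne_mem_Ioo_of_weight_eq_natCast (hx : x ∈ Set.Icc 0 1) {A : Finset ℕ} {n : ℕ}
    (hA : weight E A x = n) {i : E} (hiA : ↑i ∈ A) (hi : x i ∈ Set.Ioo 0 1) :
    ∃ j : E, ↑j ∈ A ∧ j ≠ i ∧ x j ∈ Set.Ioo 0 1 := by
  by_contra! h
  set s := univ.filter fun e : ↥E => ↑e ∈ A
  have h01 : ∀ e ∈ s.erase i, x e = if x e = 1 then 1 else 0 := by
    intro e he
    obtain ⟨hei, hes⟩ := mem_erase.1 he
    have hIoo := h e (mem_filter.1 hes).2 hei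
    split_ifs with h1
    · exact h1
    · by_contra h0
      exact hIoo ⟨(hx.1 e).lt_of_ne' h0, (hx.2 e).lt_of_ne h1⟩
  have hsum : x i + #((s.erase i).filter (x · = 1)) = n := by
    rw [← hA, weight_apply, ← add_sum_erase s _ (mem_filter.2 ⟨mem_univ i, hiA⟩),
      sum_congr rfl h01, sum_boole]
  have h1 : (#((s.erase i).filter (x · = 1)) : ℝ) < n := by linarith [hi.1]
  have h2 : (n : ℝ) < #((s.erase i).filter (x · = 1)) + 1 := by linarith [hi.2]
  norm_cast at h1 h2
  omega

theorem IsMatroidRank.exists_inseparable_pair (hrk : IsMatroidRank rk)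
    (hx : x ∈ basePolyhedron E rk) {e : E} (he : x e ∈ Set.Ioo 0 1) :
    ∃ i j : E, i ≠ j ∧ x i ∈ Set.Ioo 0 1 ∧ x j ∈ Set.Ioo 0 1 ∧
      ∀ A ⊆ E, weight E A x = rk A → (↑i ∈ A ↔ ↑j ∈ A) := by
  set S := E.powerset.filter fun A => weight E A x = rk A ∧ ∃ i : E, ↑i ∈ A ∧ x i ∈ Set.Ioo 0 1
  have hES : E ∈ S := mem_filter.2 ⟨mem_powerset_self E, hx.2.1, e, e.2, he⟩
  obtain ⟨T, hTS, hTmin⟩ := exists_min_image S card ⟨E, hES⟩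
  obtain ⟨hTE, hTt, i, hiT, hi⟩ : T ⊆ E ∧ weight E T x = rk T ∧
      ∃ i : E, ↑i ∈ T ∧ x i ∈ Set.Ioo 0 1 := by simpa [S] using hTS
  obtain ⟨j, hjT, hji, hj⟩ := exists_ne_mem_Ioo_of_weight_eq_natCast hx.1 hTt hiT hi
  refine ⟨i, j, hji.symm, hi, hj, fun A hA htA => ?_⟩
  -- a tight set containing exactly one of two fractional points of `T` would cut `T` down
  have key : ∀ k : E, ↑k ∈ T → x k ∈ Set.Ioo 0 1 → ↑k ∈ A → ∀ l : E, ↑l ∈ T → ↑l ∈ A := by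
    intro k hkT hk hkA l hlT
    by_contra hlA
    have hmem : A ∩ T ∈ S := mem_filter.2 ⟨mem_powerset.2 (inter_subset_left.trans hA),
      hrk.weight_inter_eq hx hA hTE htA hTt, k, mem_inter.2 ⟨hkA, hkT⟩, hk⟩
    have hlt : #(A ∩ T) < #T :=
      card_lt_card ⟨inter_subset_right, fun h => hlA (mem_inter.1 (h hlT)).1⟩
    exact (hTmin _ hmem).not_gt hlt
  exact ⟨fun h => key i hiT hi h j hjT, fun h => key j hjT hj h i hiT⟩

theorem eventually_add_smul_mem_basePolyhedron (hx : x ∈ basePolyhedron E rk) {d : ↑E → ℝ}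
    (hd : ∀ e, d e = 0 ∨ x e ∈ Set.Ioo 0 1)
    (hdA : ∀ A ⊆ E, weight E A d = 0 ∨ weight E A x < rk A) :
    ∀ᶠ σ in 𝓝 (0 : ℝ), x + σ • d ∈ basePolyhedron E rk := by
  have hbox : ∀ e, ∀ᶠ σ in 𝓝 (0 : ℝ), (x + σ • d) e ∈ Set.Icc 0 1 := by
    intro e
    rcases hd e with h | h
    · exact Eventually.of_forall fun σ => by simpa [h] using ⟨hx.1.1 e, hx.1.2 e⟩
    · have : Tendsto (fun σ : ℝ => x e + σ * d e) (𝓝 0) (𝓝 (x e)) := by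
        simpa using ((continuous_mul_const (d e)).const_add (x e)).tendsto 0
      exact (this.eventually (Ioo_mem_nhds h.1 h.2)).mono fun σ hσ =>
        Set.Ioo_subset_Icc_self (by simpa using hσ)
  have hweight : ∀ A ∈ E.powerset, ∀ᶠ σ in 𝓝 (0 : ℝ), weight E A (x + σ • d) ≤ rk A := by
    intro A hA
    simp only [map_add, map_smul, smul_eq_mul]
    rcases hdA A (mem_powerset.1 hA) with h | h
    · exact Eventually.of_forall fun σ => by simpa [h] using hx.2.2 A (mem_powerset.1 hA)
    · have : Tendsto (fun σ : ℝ => weight E A x + σ * weight E A d) (𝓝 0)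
          (𝓝 (weight E A x)) := by
        simpa using ((continuous_mul_const (weight E A d)).const_add (weight E A x)).tendsto 0
      exact (this.eventually (gt_mem_nhds h)).mono fun _ => le_of_lt
  have hE : weight E E d = 0 := (hdA E subset_rfl).resolve_right (by simp [hx.2.1])
  filter_upwards [eventually_all.2 hbox, (Finset.eventually_all _).2 hweight] with σ h1 h2
  exact ⟨⟨fun e => (h1 e).1, fun e => (h1 e).2⟩, by simp [hE, hx.2.1],
    fun A hA => h2 A (mem_powerset.2 hA)⟩

theorem IsMatroidRank.eq_zero_or_eq_one_of_mem_extremePoints (hrk : IsMatroidRank rk)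
    (hx : x ∈ (basePolyhedron E rk).extremePoints ℝ) (e : E) : x e = 0 ∨ x e = 1 := by
  by_contra! h
  obtain ⟨i, j, hij, hi, hj, hsep⟩ := hrk.exists_inseparable_pair hx.1
    (e := e) ⟨(hx.1.1.1 e).lt_of_ne' h.1, (hx.1.1.2 e).lt_of_ne h.2⟩
  set d : ↑E → ℝ := Pi.single i 1 - Pi.single j 1
  have hev : ∀ᶠ σ in 𝓝 (0 : ℝ), x + σ • d ∈ basePolyhedron E rk := by
    refine eventually_add_smul_mem_basePolyhedron hx.1 (fun e => ?_) (fun A hA => ?_)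
    · by_cases hei : e = i
      · exact .inr (hei ▸ hi)
      by_cases hej : e = j
      · exact .inr (hej ▸ hj)
      · simp [d, hei, hej]
    · by_cases htA : weight E A x = rk A
      · have := hsep A hA htA
        simp only [d, map_sub, weight_single]
        split_ifs <;> simp_all
      · exact .inr ((hx.1.2.2 A hA).lt_of_ne htA)
  have hev' := (continuous_neg.tendsto' 0 0 neg_zero).eventually hev
  obtain ⟨σ, ⟨h₁, h₂⟩, hσ⟩ :=
    (((hev.and hev').filter_mono nhdsWithin_le_nhds).and
      (self_mem_nhdsWithin (s := {0}ᶜ))).exists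
  have hseg : x ∈ openSegment ℝ (x + σ • d) (x + -σ • d) :=
    ⟨1 / 2, 1 / 2, by norm_num, by norm_num, by norm_num, by ext; simp; ring⟩
  have := congrFun (hx.2 h₁ h₂ hseg) i
  simp [d, hij] at this
  exact hσ this

theorem IsMatroidRank.mem_basesOfRank (hrk : IsMatroidRank rk) {B : Finset ℕ} (hB : B ⊆ E)
    (h : basisVector E B ∈ basePolyhedron E rk) : B ∈ basesOfRank E rk := by
  have hBB := h.2.2 B hB
  have hEB := h.2.1
  rw [weight_basisVector B hB, inter_self] at hBB
  rw [weight_basisVector E hB, inter_eq_right.2 hB] at hEB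
  have hrkB : rk B = #B := le_antisymm (hrk.le_card B) (by exact_mod_cast hBB)
  exact mem_filter.2 ⟨mem_powerset.2 hB, hrkB, by rw [hrkB]; exact_mod_cast hEB⟩

theorem IsMatroidRank.extremePoints_subset (hrk : IsMatroidRank rk) :
    (basePolyhedron E rk).extremePoints ℝ ⊆ basisVector E '' basesOfRank E rk := by
  intro x hx
  set B := (univ.filter fun e : ↥E => x e = 1).map (Function.Embedding.subtype _)
  have hxB : basisVector E B = x := by
    ext e
    rcases hrk.eq_zero_or_eq_one_of_mem_extremePoints hx e with h | h <;> simp [basisVector, B, h]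
  refine ⟨B, hrk.mem_basesOfRank (fun n hn => ?_) (hxB ▸ hx.1), hxB⟩
  obtain ⟨e, -, rfl⟩ := mem_map.1 hn
  exact e.2

theorem IsMatroidRank.basePolytope_eq (hrk : IsMatroidRank rk) :
    basePolytope E (basesOfRank E rk) = basePolyhedron E rk := by
  refine hrk.basePolytope_subset.antisymm ?_
  calc basePolyhedron E rk
      = closure (convexHull ℝ ((basePolyhedron E rk).extremePoints ℝ)) :=
        (closure_convexHull_extremePoints (isCompact_basePolyhedron E rk)
          (convex_basePolyhedron E rk)).symm
    _ ⊆ closure (basePolytope E (basesOfRank E rk)) :=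
        closure_mono (convexHull_mono hrk.extremePoints_subset)
    _ = basePolytope E (basesOfRank E rk) :=
        (((basesOfRank E rk).finite_toSet.image _).isClosed_convexHull ℝ).closure_eq

end Integrality

section MatroidPolytope

variable {E : Finset ℕ} {ℬ : Finset (Finset ℕ)} {x : ↑E → ℝ}

theorem IsBasisFamily.isMatroidRank_famRank (hM : IsBasisFamily E ℬ) :
    IsMatroidRank (famRank ℬ) :=
  ⟨famRank_le_card, fun _ _ h => famRank_mono h, hM.famRank_union_add_famRank_inter_le⟩

theorem IsBasisFamily.basesOfRank_famRank (hM : IsBasisFamily E ℬ) :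
    basesOfRank E (famRank ℬ) = ℬ := by
  ext B
  simp only [basesOfRank, mem_filter, mem_powerset]
  constructor
  · rintro ⟨-, hrk, hrkE⟩
    obtain ⟨B', hB', hcard⟩ := exists_card_inter_eq_famRank hM.1 B
    have hBB' : B ⊆ B' := inter_eq_left.1 (eq_of_subset_of_card_le inter_subset_left (by omega))
    have : B = B' := eq_of_subset_of_card_le hBB' (by rw [← hM.famRank_eq_card hB']; omega)
    exact this ▸ hB'
  · intro hB
    have hrkB : famRank ℬ B = #B :=
      le_antisymm (famRank_le_card B) (by simpa using card_inter_le_famRank (A := B) hB)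
    exact ⟨hM.2.1 B hB, hrkB, by rw [hrkB, hM.famRank_eq_card hB]⟩

noncomputable def excess (ℬ : Finset (Finset ℕ)) (x : ↑E → ℝ) (A : Finset ℕ) : ℝ :=
  weight E A x - famRank ℬ A

theorem IsBasisFamily.excess_add_excess_le (hM : IsBasisFamily E ℬ) (x : ↑E → ℝ)
    (A B : Finset ℕ) : excess ℬ x A + excess ℬ x B ≤ excess ℬ x (A ∪ B) + excess ℬ x (A ∩ B) := by
  have h1 := weight_union_add_weight_inter A B x
  have h2 : (famRank ℬ (A ∪ B) + famRank ℬ (A ∩ B) : ℝ) ≤ famRank ℬ A + famRank ℬ B := by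
    exact_mod_cast hM.famRank_union_add_famRank_inter_le A B
  simp only [excess]
  linarith

theorem IsBasisFamily.excess_le_excess_famClosure (hM : IsBasisFamily E ℬ) (hx : 0 ≤ x)
    (A : Finset ℕ) : excess ℬ x A ≤ excess ℬ x (famClosure E ℬ A) := by
  simp only [excess, hM.famRank_famClosure]
  linarith [weight_mono hx (subset_famClosure (E := E) (ℬ := ℬ) A) (x := x)]

theorem IsBasisFamily.exists_mem_cyclicFlats_excess_le (hM : IsBasisFamily E ℬ)
    (hx : x ∈ Set.Icc 0 1) {A : Finset ℕ} (hA : A ⊆ E) :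
    ∃ Z ∈ cyclicFlats E ℬ, excess ℬ x A ≤ excess ℬ x Z := by
  obtain ⟨m, hmA, hm, hrk⟩ := exists_isCyclic_subset (ℬ := ℬ) A
  refine ⟨famClosure E ℬ m, hM.mem_cyclicFlats_iff.2
    ⟨hM.isFlat_famClosure (hmA.trans hA), hM.isCyclic_famClosure hm⟩,
    le_trans ?_ (hM.excess_le_excess_famClosure hx.1 m)⟩
  have h1 := weight_add_weight_sdiff hmA x
  have h2 := weight_le_card hx.2 (A \ m)
  have h3 : (famRank ℬ m + #(A \ m) : ℝ) ≤ famRank ℬ A := by exact_mod_cast hrk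
  simp only [excess]
  linarith

theorem IsBasisFamily.mem_basePolyhedron_famRank_iff (hM : IsBasisFamily E ℬ) :
    x ∈ basePolyhedron E (famRank ℬ) ↔ x ∈ Set.Icc 0 1 ∧ weight E E x = famRank ℬ E ∧
      ∀ Z ∈ cyclicFlats E ℬ, weight E Z x ≤ famRank ℬ Z := by
  refine ⟨fun ⟨hx, hE, hA⟩ => ⟨hx, hE, fun Z hZ => hA Z (subset_of_mem_cyclicFlats hZ)⟩,
    fun ⟨hx, hE, hZ⟩ => ⟨hx, hE, fun A hA => ?_⟩⟩
  obtain ⟨Z, hZC, hAZ⟩ := hM.exists_mem_cyclicFlats_excess_le hx hA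
  have := hZ Z hZC
  simp only [excess] at hAZ
  linarith

section ChainRank

variable {C : Finset (Finset ℕ)}

theorem chainRank_le {Z : Finset ℕ} (hZ : Z ∈ C) (A : Finset ℕ) :
    chainRank ℬ C A ≤ famRank ℬ Z + #(A \ Z) := by
  rw [chainRank, dif_pos ⟨Z, hZ⟩]
  exact inf'_le _ hZ

theorem exists_chainRank_eq (hC : C.Nonempty) (A : Finset ℕ) :
    ∃ Z ∈ C, chainRank ℬ C A = famRank ℬ Z + #(A \ Z) := by
  rw [chainRank, dif_pos hC]
  exact exists_mem_eq_inf' hC _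

theorem IsBasisFamily.famRank_le_chainRank (hM : IsBasisFamily E ℬ) (hC : C.Nonempty)
    (A : Finset ℕ) : famRank ℬ A ≤ chainRank ℬ C A := by
  obtain ⟨Z, -, hZ⟩ := exists_chainRank_eq (ℬ := ℬ) hC A
  rw [hZ]
  calc famRank ℬ A ≤ famRank ℬ (Z ∪ A \ Z) := famRank_mono (by simp)
    _ ≤ famRank ℬ Z + #(A \ Z) := hM.famRank_union_le Z (A \ Z)

theorem IsBasisFamily.chainRank_eq_famRank (hM : IsBasisFamily E ℬ) {Z : Finset ℕ}
    (hZ : Z ∈ C) : chainRank ℬ C Z = famRank ℬ Z :=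
  le_antisymm (by simpa using chainRank_le (ℬ := ℬ) hZ Z) (hM.famRank_le_chainRank ⟨Z, hZ⟩ Z)

theorem card_union_sdiff_add_card_inter_sdiff_le {A B Z W : Finset ℕ} (hWZ : W ⊆ Z) :
    #((A ∪ B) \ Z) + #((A ∩ B) \ W) ≤ #(A \ Z) + #(B \ W) := by
  have h1 : (A ∪ B) \ Z ∪ (A ∩ B) \ W ⊆ A \ Z ∪ B \ W := by
    intro a
    have := @hWZ a
    simp only [mem_union, mem_inter, mem_sdiff]
    tauto
  have h2 : (A ∪ B) \ Z ∩ ((A ∩ B) \ W) ⊆ A \ Z ∩ (B \ W) := by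
    intro a
    simp only [mem_union, mem_inter, mem_sdiff]
    tauto
  rw [← card_union_add_card_inter, ← card_union_add_card_inter (A \ Z)]
  exact add_le_add (card_le_card h1) (card_le_card h2)

theorem isMatroidRank_chainRank (hempty : ∅ ∈ C) (hC : IsChain (· ⊆ ·) (C : Set (Finset ℕ))) :
    IsMatroidRank (chainRank ℬ C) := by
  refine ⟨fun A => ?_, fun A B hAB => ?_, fun A B => ?_⟩
  · simpa [Nat.le_zero.1 (famRank_le_card (ℬ := ℬ) ∅)] using chainRank_le (ℬ := ℬ) hempty A
  · obtain ⟨Z, hZ, hB⟩ := exists_chainRank_eq (ℬ := ℬ) ⟨∅, hempty⟩ B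
    rw [hB]
    exact (chainRank_le hZ A).trans (by gcongr)
  · obtain ⟨Z, hZ, hA⟩ := exists_chainRank_eq (ℬ := ℬ) ⟨∅, hempty⟩ A
    obtain ⟨W, hW, hB⟩ := exists_chainRank_eq (ℬ := ℬ) ⟨∅, hempty⟩ B
    rcases hC.total hZ hW with h | h
    · have := card_union_sdiff_add_card_inter_sdiff_le (A := B) (B := A) h
      rw [union_comm, inter_comm] at this
      have := chainRank_le (ℬ := ℬ) hW (A ∪ B)
      have := chainRank_le (ℬ := ℬ) hZ (A ∩ B)
      omega
    · have := card_union_sdiff_add_card_inter_sdiff_le (A := A) (B := B) h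
      have := chainRank_le (ℬ := ℬ) hZ (A ∪ B)
      have := chainRank_le (ℬ := ℬ) hW (A ∩ B)
      omega

theorem IsBasisFamily.mem_basePolyhedron_chainRank_iff (hM : IsBasisFamily E ℬ)
    (hEC : E ∈ C) (hCE : ∀ Z ∈ C, Z ⊆ E) :
    x ∈ basePolyhedron E (chainRank ℬ C) ↔ x ∈ Set.Icc 0 1 ∧ weight E E x = famRank ℬ E ∧
      ∀ Z ∈ C, weight E Z x ≤ famRank ℬ Z := by
  simp only [basePolyhedron, Set.mem_ofPred_eq, hM.chainRank_eq_famRank hEC]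
  refine ⟨fun ⟨hx, hE, hA⟩ => ⟨hx, hE, fun Z hZ => ?_⟩, fun ⟨hx, hE, hZ⟩ => ⟨hx, hE, fun A _ => ?_⟩⟩
  · simpa [hM.chainRank_eq_famRank hZ] using hA Z (hCE Z hZ)
  · obtain ⟨Z, hZC, hAZ⟩ := exists_chainRank_eq (ℬ := ℬ) ⟨E, hEC⟩ A
    have h1 := weight_add_weight_sdiff (inter_subset_left (s₁ := A) (s₂ := Z)) x
    rw [sdiff_inter_self_left] at h1
    have h2 := weight_mono hx.1 (inter_subset_right (s₁ := A) (s₂ := Z))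
    have h3 := weight_le_card hx.2 (A \ Z)
    have h4 := hZ Z hZC
    rw [hAZ]
    push_cast
    linarith

end ChainRank

end MatroidPolytope

section SignedSums

variable {α : Type*} [DecidableEq α]

theorem neg_one_pow_card_sdiff_eq {A B D : Finset α} (hAB : A ⊆ B) (hBD : B ⊆ D) :
    (-1 : ℤ) ^ #(D \ B) = (-1) ^ #(D \ A) * (-1) ^ #(B \ A) := by
  have h : #(D \ A) = #(D \ B) + #(B \ A) := by
    rw [card_sdiff_of_subset (hAB.trans hBD), card_sdiff_of_subset hBD,
      card_sdiff_of_subset hAB]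
    have := card_le_card hAB
    have := card_le_card hBD
    omega
  rw [h, pow_add, mul_assoc, ← pow_add, ← two_mul, pow_mul, neg_one_sq, one_pow, mul_one]

theorem sum_Icc_neg_one_pow_card_sdiff {C D : Finset α} (hCD : C ⊆ D) :
    ∑ z ∈ Icc C D, (-1 : ℤ) ^ #(z \ C) = if C = D then 1 else 0 := by
  have hdisj : ∀ S ∈ (D \ C).powerset, Disjoint C S := fun S hS =>
    disjoint_of_subset_right (mem_powerset.1 hS) disjoint_sdiff
  rw [Icc_eq_image_powerset hCD, sum_image fun S hS T hT h => by
    rw [← union_sdiff_cancel_left (hdisj S hS), h, union_sdiff_cancel_left (hdisj T hT)]]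
  rw [sum_congr rfl fun S hS => by rw [union_sdiff_cancel_left (hdisj S hS)],
    sum_powerset_neg_one_pow_card]
  exact if_congr (sdiff_eq_empty_iff_subset.trans ⟨hCD.antisymm, fun h => h ▸ subset_rfl⟩) rfl rfl

theorem mobius_eq_neg_one_pow {K : Finset (Finset α)}
    (hK : ∀ C ∈ K, ∀ D ∈ K, ∀ z, C ⊆ z → z ⊆ D → z ∈ K)
    {mu : Finset α → Finset α → ℤ} (hrefl : ∀ C ∈ K, mu C C = 1)
    (hrec : ∀ C ∈ K, ∀ D ∈ K, C ⊂ D → ∑ z ∈ K.filter (fun z => C ⊆ z ∧ z ⊆ D), mu C z = 0)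
    {C D : Finset α} (hC : C ∈ K) (hD : D ∈ K) (hCD : C ⊆ D) :
    mu C D = (-1) ^ #(D \ C) := by
  induction D using Finset.strongInduction with
  | H D ih =>
  rcases hCD.eq_or_ssubset with rfl | hlt
  · simp [hrefl C hC]
  have hI : K.filter (fun z => C ⊆ z ∧ z ⊆ D) = Icc C D := by
    ext z
    simp only [mem_filter, mem_Icc, and_iff_right_iff_imp]
    exact fun h => hK C hC D hD z h.1 h.2
  have hDmem : D ∈ Icc C D := right_mem_Icc.2 hCD
  have h1 := hrec C hC D hD hlt
  have h2 := sum_Icc_neg_one_pow_card_sdiff hCD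
  rw [hI, ← add_sum_erase _ _ hDmem] at h1
  rw [if_neg hlt.ne, ← add_sum_erase _ _ hDmem] at h2
  rw [sum_congr rfl fun z hz => by
    obtain ⟨hzD, hz⟩ := mem_erase.1 hz
    obtain ⟨hCz, hzD'⟩ := mem_Icc.1 hz
    exact ih z (hzD'.ssubset_of_ne hzD) (hK C hC D hD z hCz hzD') hCz] at h1
  linarith

theorem neg_eq_sum_neg_one_pow_of_mobius {K : Finset (Finset α)}
    (hK : ∀ C ∈ K, ∀ D ∈ K, ∀ z, C ⊆ z → z ⊆ D → z ∈ K)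
    {mu : Finset α → Finset α → ℤ} (hrefl : ∀ C ∈ K, mu C C = 1)
    (hrec : ∀ C ∈ K, ∀ D ∈ K, C ⊂ D → ∑ z ∈ K.filter (fun z => C ⊆ z ∧ z ⊆ D), mu C z = 0)
    {muTop : Finset α → ℤ} (htop : ∀ C ∈ K, (∑ z ∈ K.filter (fun z => C ⊆ z), mu C z) + muTop C = 0)
    {C : Finset α} (hC : C ∈ K) :
    -muTop C = ∑ D ∈ K with C ⊆ D, (-1) ^ #(D \ C) := by
  rw [← sum_congr rfl fun D hD =>
    mobius_eq_neg_one_pow hK hrefl hrec hC (mem_filter.1 hD).1 (mem_filter.1 hD).2]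
  linarith [htop C hC]

theorem sum_sum_neg_one_pow_card_sdiff {K : Finset (Finset α)} {C₀ G : Finset α}
    (hK₀ : ∀ D ∈ K, C₀ ⊆ D) (hK : ∀ D ∈ K, ∀ C, C₀ ⊆ C → C ⊆ D → C ∈ K) (hG : C₀ ⊆ G) :
    ∑ C ∈ K with C ⊆ G, ∑ D ∈ K with C ⊆ D, (-1 : ℤ) ^ #(D \ C) =
      ∑ D ∈ K with D ∩ G ⊆ C₀, (-1) ^ #(D \ C₀) := by
  rw [sum_comm' (t' := K) (s' := fun D => Icc C₀ (D ∩ G)), sum_filter]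
  · refine sum_congr rfl fun D hD => ?_
    have hC₀ : C₀ ⊆ D ∩ G := subset_inter (hK₀ D hD) hG
    rw [sum_congr rfl fun C hC => neg_one_pow_card_sdiff_eq (mem_Icc.1 hC).1
      ((mem_Icc.1 hC).2.trans inter_subset_left), ← mul_sum,
      sum_Icc_neg_one_pow_card_sdiff hC₀]
    simp only [mul_ite, mul_one, mul_zero]
    exact if_congr ⟨fun h => h ▸ subset_rfl, hC₀.antisymm⟩ rfl rfl
  · intro C D
    simp only [mem_filter, mem_Icc, subset_inter_iff]
    constructor
    · rintro ⟨⟨hC, hCG⟩, hD, hCD⟩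
      exact ⟨⟨hK₀ C hC, hCD, hCG⟩, hD⟩
    · rintro ⟨⟨hC₀C, hCD, hCG⟩, hD⟩
      exact ⟨⟨hK D hD C hC₀C hCD, hCG⟩, hD, hCD⟩

end SignedSums

section Toggle

variable {β : Type*} [DecidableEq β] (p : β) (T : Finset β)

def toggle : Finset β :=
  if p ∈ T then T.erase p else insert p T

theorem toggle_toggle : toggle p (toggle p T) = T := by
  unfold toggle
  split_ifs with h1 h2 h2 <;> simp_all [insert_erase]

theorem toggle_ne : toggle p T ≠ T := by
  unfold toggle
  split_ifs with h
  · exact (erase_ssubset h).ne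
  · exact (ssubset_insert h).ne'

theorem neg_one_pow_card_toggle : (-1 : ℤ) ^ #(toggle p T) = -(-1) ^ #T := by
  unfold toggle
  split_ifs with h
  · rw [← card_erase_add_one h, pow_succ]; ring
  · rw [card_insert_of_notMem h, pow_succ]; ring

end Toggle

section ChainComplex

variable {α : Type*}

noncomputable def chainsIn (Y : Finset (Finset α)) : Finset (Finset (Finset α)) :=
  Y.powerset.filter fun T => IsChain (· ⊆ ·) (T : Set (Finset α))

theorem mem_chainsIn {Y T : Finset (Finset α)} :
    T ∈ chainsIn Y ↔ T ⊆ Y ∧ IsChain (· ⊆ ·) (T : Set (Finset α)) := by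
  simp [chainsIn]

variable [DecidableEq α]

theorem sup'_mem_of_isChain {T : Finset (Finset α)} (hT : IsChain (· ⊆ ·) (T : Set (Finset α)))
    (hne : T.Nonempty) : T.sup' hne id ∈ T := by
  refine sup'_mem (T : Set (Finset α)) (fun a ha b hb => ?_) T hne id fun _ h => h
  rcases eq_or_ne a b with rfl | hab
  · simpa using ha
  rcases hT ha hb hab with h | h
  · rwa [sup_eq_right.2 h]
  · rwa [sup_eq_left.2 h]

variable (t : Finset α) (j : Finset α → Finset α)

-- Toggling the pivot of a chain is the sign-reversing involution of
-- `sum_chainsIn_neg_one_pow_card`.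
noncomputable def chainPivot (T : Finset (Finset α)) : Finset α :=
  if h : (T.filter fun a => ¬ t ⊆ a).Nonempty then j ((T.filter fun a => ¬ t ⊆ a).sup' h id)
  else t

variable {t j} {Y : Finset (Finset α)}

theorem chainPivot_spec (ht : t ∈ Y)
    (hj : ∀ a ∈ Y, ¬ t ⊆ a → IsLeast {u | u ∈ Y ∧ t ⊆ u ∧ a ⊆ u} (j a))
    {T : Finset (Finset α)} (hT : T ∈ chainsIn Y) :
    chainPivot t j T ∈ Y ∧ t ⊆ chainPivot t j T ∧
      ∀ a ∈ T, a ⊆ chainPivot t j T ∨ chainPivot t j T ⊆ a := by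
  obtain ⟨hTY, hT⟩ := mem_chainsIn.1 hT
  unfold chainPivot
  split_ifs with hne
  · set m := (T.filter fun a => ¬ t ⊆ a).sup' hne id
    have hm : m ∈ T.filter fun a => ¬ t ⊆ a :=
      sup'_mem_of_isChain (hT.mono fun a ha => (mem_filter.1 ha).1) hne
    obtain ⟨hmT, htm⟩ := mem_filter.1 hm
    obtain ⟨⟨hjY, htj, hmj⟩, hleast⟩ := hj m (hTY hmT) htm
    refine ⟨hjY, htj, fun a ha => ?_⟩
    by_cases hta : t ⊆ a
    · refine .inr (hleast ⟨hTY ha, hta, ?_⟩)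
      rcases eq_or_ne m a with rfl | hma
      · exact absurd hta htm
      · exact (hT hmT ha hma).resolve_right fun ham => htm (hta.trans ham)
    · exact .inl ((le_sup' id (mem_filter.2 ⟨ha, hta⟩)).trans hmj)
  · refine ⟨ht, subset_rfl, fun a ha => .inr ?_⟩
    by_contra hta
    exact hne ⟨a, mem_filter.2 ⟨ha, hta⟩⟩

theorem chainPivot_congr {T T' : Finset (Finset α)}
    (h : T'.filter (fun a => ¬ t ⊆ a) = T.filter fun a => ¬ t ⊆ a) :
    chainPivot t j T' = chainPivot t j T := by
  simp only [chainPivot, h]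

theorem chainPivot_toggle {T : Finset (Finset α)} (htp : t ⊆ chainPivot t j T) :
    chainPivot t j (toggle (chainPivot t j T) T) = chainPivot t j T := by
  refine chainPivot_congr ?_
  unfold toggle
  split_ifs
  · rw [filter_erase, erase_eq_of_notMem (by simp [htp])]
  · rw [filter_insert, if_neg (by simp [htp])]

theorem toggle_mem_chainsIn {T : Finset (Finset α)} {p : Finset α} (hT : T ∈ chainsIn Y)
    (hp : p ∈ Y) (hpT : ∀ a ∈ T, a ⊆ p ∨ p ⊆ a) : toggle p T ∈ chainsIn Y := by
  obtain ⟨hTY, hT⟩ := mem_chainsIn.1 hT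
  unfold toggle
  split_ifs
  · exact mem_chainsIn.2 ⟨(erase_subset p T).trans hTY, hT.mono (by simp)⟩
  · refine mem_chainsIn.2 ⟨insert_subset hp hTY, ?_⟩
    rw [coe_insert]
    exact hT.insert fun a ha _ => (hpT a ha).symm

theorem sum_chainsIn_neg_one_pow_card (ht : t ∈ Y)
    (hj : ∀ a ∈ Y, ¬ t ⊆ a → IsLeast {u | u ∈ Y ∧ t ⊆ u ∧ a ⊆ u} (j a)) :
    ∑ T ∈ chainsIn Y, (-1 : ℤ) ^ #T = 0 := by
  refine sum_involution (fun T _ => toggle (chainPivot t j T) T)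
    (fun T _ => by rw [neg_one_pow_card_toggle, add_neg_cancel])
    (fun T _ _ => toggle_ne _ T) (fun T hT => ?_) (fun T hT => ?_)
  · obtain ⟨hpY, -, hpT⟩ := chainPivot_spec ht hj hT
    exact toggle_mem_chainsIn hT hpY hpT
  · simp only [chainPivot_toggle (chainPivot_spec ht hj hT).2.1, toggle_toggle]

end ChainComplex

section CyclicChains

variable {E : Finset ℕ} {ℬ : Finset (Finset ℕ)} {x : ↑E → ℝ}

theorem IsBasisFamily.pair_subset_of_mem_cyclicChains (hM : IsBasisFamily E ℬ)
    (hloopless : ∀ e ∈ E, ∃ B ∈ ℬ, e ∈ B) (hcoloopless : ∀ e ∈ E, ∃ B ∈ ℬ, e ∉ B)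
    {C : Finset (Finset ℕ)} (hC : C ∈ cyclicChains E ℬ) : {∅, E} ⊆ C := by
  obtain ⟨hCZ, -, ⟨F, hF, hFmin⟩, ⟨F', hF', hF'max⟩⟩ := (mem_filter.1 hC).2
  have hempty : F = ∅ := subset_empty.1 (hFmin ∅ (hM.empty_mem_cyclicFlats hloopless))
  have hE : F' = E := (subset_of_mem_cyclicFlats (hCZ hF')).antisymm
    (hF'max E (hM.ground_mem_cyclicFlats hcoloopless))
  simp [insert_subset_iff, ← hempty, ← hE, hF, hF']

theorem mem_cyclicChains_of_subset {C D : Finset (Finset ℕ)} (hD : D ∈ cyclicChains E ℬ)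
    (hC : {∅, E} ⊆ C) (hCD : C ⊆ D) : C ∈ cyclicChains E ℬ := by
  obtain ⟨hDZ, hDchain, -, -⟩ := (mem_filter.1 hD).2
  have hCZ : C ⊆ cyclicFlats E ℬ := hCD.trans (by exact_mod_cast hDZ)
  refine mem_filter.2 ⟨mem_powerset.2 hCZ, by exact_mod_cast hCZ,
    hDchain.mono (by exact_mod_cast hCD), ⟨∅, hC (by simp), fun _ _ => empty_subset _⟩,
    ⟨E, hC (by simp), fun _ hG => subset_of_mem_cyclicFlats hG⟩⟩

theorem IsBasisFamily.union_pair_mem_cyclicChains (hM : IsBasisFamily E ℬ)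
    (hloopless : ∀ e ∈ E, ∃ B ∈ ℬ, e ∈ B) (hcoloopless : ∀ e ∈ E, ∃ B ∈ ℬ, e ∉ B)
    {T : Finset (Finset ℕ)} (hTZ : T ⊆ cyclicFlats E ℬ)
    (hT : IsChain (· ⊆ ·) (T : Set (Finset ℕ))) : T ∪ {∅, E} ∈ cyclicChains E ℬ := by
  have hsub : T ∪ {∅, E} ⊆ cyclicFlats E ℬ := union_subset hTZ (insert_subset
    (hM.empty_mem_cyclicFlats hloopless) (by simpa using hM.ground_mem_cyclicFlats hcoloopless))
  have hchain : IsChain (· ⊆ ·) (↑(T ∪ {∅, E}) : Set (Finset ℕ)) := by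
    rw [union_insert, union_singleton, coe_insert, coe_insert]
    exact (hT.insert fun Z hZ _ => .inr (subset_of_mem_cyclicFlats (hTZ hZ))).insert
      fun Z _ _ => .inl (empty_subset Z)
  exact mem_filter.2 ⟨mem_powerset.2 hsub, by exact_mod_cast hsub, hchain,
    ⟨∅, by simp, fun _ _ => empty_subset _⟩, ⟨E, by simp, fun _ hG => subset_of_mem_cyclicFlats hG⟩⟩

theorem IsBasisFamily.mem_basePolytope_iff (hM : IsBasisFamily E ℬ) :
    x ∈ basePolytope E ℬ ↔ x ∈ Set.Icc 0 1 ∧ weight E E x = famRank ℬ E ∧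
      ∀ Z ∈ cyclicFlats E ℬ, weight E Z x ≤ famRank ℬ Z := by
  have h := hM.isMatroidRank_famRank.basePolytope_eq (E := E)
  rw [hM.basesOfRank_famRank] at h
  rw [h, hM.mem_basePolyhedron_famRank_iff]

theorem IsBasisFamily.mem_basePolytope_chainSchubert_iff (hM : IsBasisFamily E ℬ)
    (hloopless : ∀ e ∈ E, ∃ B ∈ ℬ, e ∈ B) (hcoloopless : ∀ e ∈ E, ∃ B ∈ ℬ, e ∉ B)
    {C : Finset (Finset ℕ)} (hC : C ∈ cyclicChains E ℬ) :
    x ∈ basePolytope E (chainSchubert E ℬ C) ↔ x ∈ Set.Icc 0 1 ∧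
      weight E E x = famRank ℬ E ∧ ∀ Z ∈ C, weight E Z x ≤ famRank ℬ Z := by
  have h₀ := hM.pair_subset_of_mem_cyclicChains hloopless hcoloopless hC
  obtain ⟨hCZ, hchain, -, -⟩ := (mem_filter.1 hC).2
  rw [chainSchubert, (isMatroidRank_chainRank (h₀ (by simp)) hchain).basePolytope_eq,
    hM.mem_basePolyhedron_chainRank_iff (h₀ (by simp)) fun Z hZ =>
      subset_of_mem_cyclicFlats (hCZ hZ)]

theorem IsBasisFamily.sum_cyclicChains_eq_sum_chainsIn (hM : IsBasisFamily E ℬ)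
    (hloopless : ∀ e ∈ E, ∃ B ∈ ℬ, e ∈ B) (hcoloopless : ∀ e ∈ E, ∃ B ∈ ℬ, e ∉ B)
    {G : Finset (Finset ℕ)} (hG : {∅, E} ⊆ G) (f : Finset (Finset ℕ) → ℤ) :
    ∑ D ∈ cyclicChains E ℬ with D ∩ G ⊆ {∅, E}, f (D \ {∅, E}) =
      ∑ T ∈ chainsIn (cyclicFlats E ℬ \ G), f T := by
  have hdisj : ∀ T ∈ chainsIn (cyclicFlats E ℬ \ G), Disjoint T {∅, E} := fun T hT =>
    disjoint_of_subset_left (mem_chainsIn.1 hT).1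
      (disjoint_of_subset_right hG sdiff_disjoint)
  refine sum_nbij' (· \ {∅, E}) (· ∪ {∅, E}) (fun D hD => ?_) (fun T hT => ?_)
    (fun D hD => sdiff_union_of_subset (hM.pair_subset_of_mem_cyclicChains hloopless hcoloopless
      (mem_filter.1 hD).1)) (fun T hT => union_sdiff_cancel_right (hdisj T hT)) fun _ _ => rfl
  · obtain ⟨hD, hDG⟩ := mem_filter.1 hD
    obtain ⟨hDZ, hDchain, -, -⟩ := (mem_filter.1 hD).2
    refine mem_chainsIn.2 ⟨fun Z hZ => ?_, hDchain.mono (by simp)⟩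
    obtain ⟨hZD, hZ₀⟩ := mem_sdiff.1 hZ
    exact mem_sdiff.2 ⟨hDZ hZD, fun hZG => hZ₀ (hDG (mem_inter.2 ⟨hZD, hZG⟩))⟩
  · obtain ⟨hTY, hT⟩ := mem_chainsIn.1 hT
    refine mem_filter.2 ⟨hM.union_pair_mem_cyclicChains hloopless hcoloopless
      (hTY.trans sdiff_subset) hT, fun Z hZ => ?_⟩
    obtain ⟨hZ, hZG⟩ := mem_inter.1 hZ
    exact (mem_union.1 hZ).resolve_left fun hZT => (mem_sdiff.1 (hTY hZT)).2 hZG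

end CyclicChains

section Satisfied

variable {E : Finset ℕ} {ℬ : Finset (Finset ℕ)} {x : ↑E → ℝ}

noncomputable def satisfiedFlats (ℬ : Finset (Finset ℕ)) (x : ↑E → ℝ) : Finset (Finset ℕ) :=
  (cyclicFlats E ℬ).filter fun Z => excess ℬ x Z ≤ 0

theorem subset_satisfiedFlats_iff {𝒵 : Finset (Finset ℕ)} (h𝒵 : 𝒵 ⊆ cyclicFlats E ℬ) :
    𝒵 ⊆ satisfiedFlats ℬ x ↔ ∀ Z ∈ 𝒵, weight E Z x ≤ famRank ℬ Z := by
  simp only [subset_iff, satisfiedFlats, mem_filter, excess, sub_nonpos]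
  exact forall₂_congr fun Z hZ => and_iff_right (h𝒵 hZ)

theorem mem_sdiff_satisfiedFlats {Z : Finset ℕ} :
    Z ∈ cyclicFlats E ℬ \ satisfiedFlats ℬ x ↔ Z ∈ cyclicFlats E ℬ ∧ 0 < excess ℬ x Z := by
  simp +contextual [satisfiedFlats]

theorem IsBasisFamily.pair_subset_satisfiedFlats (hM : IsBasisFamily E ℬ)
    (hloopless : ∀ e ∈ E, ∃ B ∈ ℬ, e ∈ B) (hcoloopless : ∀ e ∈ E, ∃ B ∈ ℬ, e ∉ B)
    (hx : weight E E x = famRank ℬ E) : {∅, E} ⊆ satisfiedFlats ℬ x := by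
  have h₀ := insert_subset (hM.empty_mem_cyclicFlats hloopless)
    (singleton_subset_iff.2 (hM.ground_mem_cyclicFlats hcoloopless))
  refine (subset_satisfiedFlats_iff h₀).2 fun Z hZ => ?_
  rcases mem_insert.1 hZ with rfl | hZ
  · simp [weight_apply]
  · rw [mem_singleton.1 hZ, hx]

theorem polyInd_of_notMem {ℬ' : Finset (Finset ℕ)} (h : x ∉ basePolytope E ℬ') :
    polyInd E ℬ' x = 0 :=
  if_neg h

theorem IsBasisFamily.polyInd_eq (hM : IsBasisFamily E ℬ)
    (hx : x ∈ Set.Icc 0 1 ∧ weight E E x = famRank ℬ E) :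
    polyInd E ℬ x = if cyclicFlats E ℬ ⊆ satisfiedFlats ℬ x then 1 else 0 := by
  simp only [polyInd, hM.mem_basePolytope_iff, hx, true_and,
    subset_satisfiedFlats_iff subset_rfl]

theorem IsBasisFamily.polyInd_chainSchubert_eq (hM : IsBasisFamily E ℬ)
    (hloopless : ∀ e ∈ E, ∃ B ∈ ℬ, e ∈ B) (hcoloopless : ∀ e ∈ E, ∃ B ∈ ℬ, e ∉ B)
    {C : Finset (Finset ℕ)} (hC : C ∈ cyclicChains E ℬ)
    (hx : x ∈ Set.Icc 0 1 ∧ weight E E x = famRank ℬ E) :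
    polyInd E (chainSchubert E ℬ C) x = if C ⊆ satisfiedFlats ℬ x then 1 else 0 := by
  simp only [polyInd, hM.mem_basePolytope_chainSchubert_iff hloopless hcoloopless hC, hx,
    true_and, subset_satisfiedFlats_iff (coe_subset.1 (mem_filter.1 hC).2.1)]

/-- For the most violated cyclic flat `t`, the join `cl(a ∪ t)` of a violated `a` with `t` is
again violated, by supermodularity of the excess. -/
theorem IsBasisFamily.sum_chainsIn_violated (hM : IsBasisFamily E ℬ) (hx : x ∈ Set.Icc 0 1) :
    ∑ T ∈ chainsIn (cyclicFlats E ℬ \ satisfiedFlats ℬ x), (-1 : ℤ) ^ #T =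
      if cyclicFlats E ℬ ⊆ satisfiedFlats ℬ x then 1 else 0 := by
  split_ifs with hY
  · simp [sdiff_eq_empty_iff_subset.2 hY, chainsIn, filter_singleton]
  obtain ⟨t, htY, htmax⟩ := exists_max_image (cyclicFlats E ℬ \ satisfiedFlats ℬ x)
    (excess ℬ x) (sdiff_nonempty.2 hY)
  refine sum_chainsIn_neg_one_pow_card htY (j := fun a => famClosure E ℬ (a ∪ t))
    fun a haY _ => ?_
  obtain ⟨haZ, ha⟩ := mem_sdiff_satisfiedFlats.1 haY
  obtain ⟨htZ, ht⟩ := mem_sdiff_satisfiedFlats.1 htY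
  obtain ⟨haF, haC⟩ := hM.mem_cyclicFlats_iff.1 haZ
  obtain ⟨htF, htC⟩ := hM.mem_cyclicFlats_iff.1 htZ
  have hJ : famClosure E ℬ (a ∪ t) ∈ cyclicFlats E ℬ := hM.mem_cyclicFlats_iff.2
    ⟨hM.isFlat_famClosure (union_subset haF.1 htF.1),
      hM.isCyclic_famClosure (hM.isCyclic_union haC htC)⟩
  obtain ⟨Z, hZ, hZle⟩ :=
    hM.exists_mem_cyclicFlats_excess_le hx (inter_subset_left.trans haF.1) (A := a ∩ t)
  have hZt : excess ℬ x Z ≤ excess ℬ x t := by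
    by_cases hZY : 0 < excess ℬ x Z
    · exact htmax Z (mem_sdiff_satisfiedFlats.2 ⟨hZ, hZY⟩)
    · linarith
  have hsuper := hM.excess_add_excess_le x a t
  have hcl := hM.excess_le_excess_famClosure hx.1 (a ∪ t)
  refine ⟨⟨mem_sdiff_satisfiedFlats.2 ⟨hJ, by linarith⟩,
    subset_union_right.trans (subset_famClosure _),
    subset_union_left.trans (subset_famClosure _)⟩, fun u ⟨huY, htu, hau⟩ => ?_⟩
  exact hM.famClosure_subset_of_isFlat (hM.mem_cyclicFlats_iff.1 (mem_sdiff.1 huY).1).1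
    (union_subset hau htu)

end Satisfied

/-- Let `M` be a matroid on a finite ground set `E` with no loops and no
coloops. Then, as functions `ℝ^E → ℤ`, the indicator function of the base polytope `P(M)`
equals the sum, over all chains `C` in the lattice of cyclic flats of `M` containing its
minimum and maximum, of `λ_C = −μ(C, 1̂)` times the indicator function of `P(S_C)`, where
`μ` is the Möbius function of the cyclic chain lattice of `M` (characterized here by
`μ(x, x) = 1` and `Σ_{x ≤ z ≤ y} μ(x, z) = 0` for `x < y`, with `μ(C, 1̂)` recorded in
`muTop C`). -/
theorem statement7 (E : Finset ℕ) (ℬ : Finset (Finset ℕ)) (hM : IsBasisFamily E ℬ)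
    (hloopless : ∀ e ∈ E, ∃ B ∈ ℬ, e ∈ B)
    (hcoloopless : ∀ e ∈ E, ∃ B ∈ ℬ, e ∉ B)
    (mu : Finset (Finset ℕ) → Finset (Finset ℕ) → ℤ) (muTop : Finset (Finset ℕ) → ℤ)
    (hrefl : ∀ C ∈ cyclicChains E ℬ, mu C C = 1)
    (hrec : ∀ C ∈ cyclicChains E ℬ, ∀ D ∈ cyclicChains E ℬ, C ⊂ D →
      ∑ z ∈ (cyclicChains E ℬ).filter (fun z => C ⊆ z ∧ z ⊆ D), mu C z = 0)
    (htop : ∀ C ∈ cyclicChains E ℬ,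
      (∑ z ∈ (cyclicChains E ℬ).filter (fun z => C ⊆ z), mu C z) + muTop C = 0) :
    polyInd E ℬ
      = fun x => ∑ C ∈ cyclicChains E ℬ,
          (-(muTop C)) * polyInd E (chainSchubert E ℬ C) x := by
  funext x
  have hK₀ := fun D => hM.pair_subset_of_mem_cyclicChains hloopless hcoloopless (C := D)
  by_cases hx : x ∈ Set.Icc 0 1 ∧ weight E E x = famRank ℬ E
  swap
  · rw [polyInd_of_notMem fun h => hx ⟨(hM.mem_basePolytope_iff.1 h).1,
      (hM.mem_basePolytope_iff.1 h).2.1⟩]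
    refine (sum_eq_zero fun C hC => ?_).symm
    have hC' := hM.mem_basePolytope_chainSchubert_iff hloopless hcoloopless hC (x := x)
    rw [polyInd_of_notMem fun h => hx ⟨(hC'.1 h).1, (hC'.1 h).2.1⟩, mul_zero]
  set G := satisfiedFlats ℬ x
  have hG := hM.pair_subset_satisfiedFlats hloopless hcoloopless hx.2
  calc polyInd E ℬ x = ∑ T ∈ chainsIn (cyclicFlats E ℬ \ G), (-1) ^ #T := by
        rw [hM.polyInd_eq hx, hM.sum_chainsIn_violated hx.1]
    _ = ∑ D ∈ cyclicChains E ℬ with D ∩ G ⊆ {∅, E}, (-1) ^ #(D \ {∅, E}) :=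
        (hM.sum_cyclicChains_eq_sum_chainsIn hloopless hcoloopless hG _).symm
    _ = ∑ C ∈ cyclicChains E ℬ with C ⊆ G, ∑ D ∈ cyclicChains E ℬ with C ⊆ D, (-1) ^ #(D \ C) :=
        (sum_sum_neg_one_pow_card_sdiff hK₀ (fun D hD _ => mem_cyclicChains_of_subset hD) hG).symm
    _ = _ := by
        rw [sum_filter]
        refine sum_congr rfl fun C hC => ?_
        rw [hM.polyInd_chainSchubert_eq hloopless hcoloopless hC hx, mul_ite, mul_one, mul_zero,
          neg_eq_sum_neg_one_pow_of_mobius (fun C hC D hD z hCz hzD =>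
            mem_cyclicChains_of_subset hD ((hK₀ C hC).trans hCz) hzD) hrefl hrec htop hC]

end GPoly
end

section
/- Let M and N be matroids on the same finite ground set E. Then the base polytope P(N) is a translate of P(M) (i.e., P(N) = v + P(M) for some v ∈ ℝ^E) if and only if the union of the set of loops and the set of coloops of M equals the union of the set of loops and the set of coloops of N, and the matroids obtained from M and from N by deleting all loops and contracting all coloops are equal. In particular, if M has no loops and no coloops, then P(M) is the unique base polytope of a matroid in its translation class. -/
open scoped Classical

namespace GPoly

/-- The set of loops of the matroid with bases `ℬ` on `E`: elements in no basis. -/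
noncomputable def loopsOf (E : Finset ℕ) (ℬ : Finset (Finset ℕ)) : Finset ℕ :=
  E.filter fun e => ∀ B ∈ ℬ, e ∉ B

/-- The set of coloops of the matroid with bases `ℬ` on `E`: elements in every basis. -/
noncomputable def coloopsOf (E : Finset ℕ) (ℬ : Finset (Finset ℕ)) : Finset ℕ :=
  E.filter fun e => ∀ B ∈ ℬ, e ∈ B

section Aux
variable {ι : Type*}

lemma coord_bounds (t : Finset (ι → ℝ)) (x : ι → ℝ)
    (hx : x ∈ convexHull ℝ (↑t : Set (ι → ℝ))) (i : ι) (a b : ℝ)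
    (hb : ∀ p ∈ t, a ≤ p i ∧ p i ≤ b) : a ≤ x i ∧ x i ≤ b := by
  rw [Finset.convexHull_eq] at hx
  obtain ⟨w, h0, h1, hc⟩ := hx
  have hxi : x i = ∑ q ∈ t, w q * q i := by
    rw [← hc, Finset.centerMass_eq_of_sum_1 _ _ h1]
    simp [Finset.sum_apply]
  constructor
  · calc a = ∑ q ∈ t, w q * a := by rw [← Finset.sum_mul, h1, one_mul]
    _ ≤ ∑ q ∈ t, w q * q i :=
        Finset.sum_le_sum fun q hq => mul_le_mul_of_nonneg_left (hb q hq).1 (h0 q hq)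
    _ = x i := hxi.symm
  · calc x i = ∑ q ∈ t, w q * q i := hxi
    _ ≤ ∑ q ∈ t, w q * b :=
        Finset.sum_le_sum fun q hq => mul_le_mul_of_nonneg_left (hb q hq).2 (h0 q hq)
    _ = b := by rw [← Finset.sum_mul, h1, one_mul]

lemma extreme01 (t : Finset (ι → ℝ)) (ht : ∀ p ∈ t, ∀ i, p i = 0 ∨ p i = 1)
    (x : ι → ℝ) (hx01 : ∀ i, x i = 0 ∨ x i = 1)
    (hx : x ∈ convexHull ℝ (↑t : Set (ι → ℝ))) : x ∈ t := by
  rw [Finset.convexHull_eq] at hx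
  obtain ⟨w, h0, h1, hc⟩ := hx
  obtain ⟨p, hp, hwp⟩ := Finset.exists_ne_zero_of_sum_ne_zero
    (show ∑ q ∈ t, w q ≠ 0 by rw [h1]; norm_num)
  have hxi : ∀ i, x i = ∑ q ∈ t, w q * q i := by
    intro i
    rw [← hc, Finset.centerMass_eq_of_sum_1 _ _ h1]
    simp [Finset.sum_apply]
  have hpx : p = x := by
    funext i
    rcases hx01 i with h | h
    · have hterm : ∀ q ∈ t, 0 ≤ w q * q i := fun q hq =>
        mul_nonneg (h0 q hq) (by rcases ht q hq i with h' | h' <;> simp [h'])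
      have hz : ∑ q ∈ t, w q * q i = 0 := by rw [← hxi i, h]
      have h2 := (Finset.sum_eq_zero_iff_of_nonneg hterm).1 hz p hp
      rcases ht p hp i with h' | h'
      · rw [h', h]
      · exfalso; rw [h'] at h2; simp [hwp] at h2
    · have hterm : ∀ q ∈ t, 0 ≤ w q * (1 - q i) := fun q hq =>
        mul_nonneg (h0 q hq) (by rcases ht q hq i with h' | h' <;> simp [h'])
      have hz : ∑ q ∈ t, w q * (1 - q i) = 0 := by
        simp only [mul_sub, mul_one, Finset.sum_sub_distrib]
        rw [h1, ← hxi i, h, sub_self]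
      have h2 := (Finset.sum_eq_zero_iff_of_nonneg hterm).1 hz p hp
      rcases ht p hp i with h' | h'
      · exfalso; rw [h'] at h2; simp [hwp] at h2
      · rw [h', h]
  exact hpx ▸ hp

lemma image_translate_hull {V : Type*} [AddCommGroup V] [Module ℝ V] (v : V) (s : Set V) :
    (fun x => v + x) '' (convexHull ℝ s) = convexHull ℝ ((fun x => v + x) '' s) := by
  have := AffineMap.image_convexHull (f := (AffineEquiv.constVAdd ℝ V v).toAffineMap) s
  simpa [vadd_eq_add] using this

lemma mem_shift {B B' cM cN : Finset ℕ} (hB : cM ⊆ B) (hB' : cN ⊆ B')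
    (h : B \ cM = B' \ cN) (a : ℕ) :
    (if a ∈ B' then (1:ℝ) else 0) =
      ((if a ∈ cN then (1:ℝ) else 0) - (if a ∈ cM then (1:ℝ) else 0)) +
        (if a ∈ B then 1 else 0) := by
  have h1 : a ∈ B ∧ a ∉ cM ↔ a ∈ B' ∧ a ∉ cN := by
    constructor <;> intro hh
    · exact Finset.mem_sdiff.1 (h ▸ Finset.mem_sdiff.2 hh)
    · exact Finset.mem_sdiff.1 (h.symm ▸ Finset.mem_sdiff.2 hh)
  have hm : a ∈ cM → a ∈ B := fun hx => hB hx
  have hn : a ∈ cN → a ∈ B' := fun hx => hB' hx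
  by_cases hcN : a ∈ cN <;> by_cases hcM : a ∈ cM <;> by_cases hab : a ∈ B <;>
    by_cases hab' : a ∈ B' <;> simp_all

lemma match_mem {E : Finset ℕ} {B B' : Finset ℕ} {v : ↑E → ℝ}
    (h : basisVector E B' = v + basisVector E B) (e : ↑E) :
    (v e = 0 → ((e : ℕ) ∈ B ↔ (e : ℕ) ∈ B')) ∧
      (v e = 1 → (e : ℕ) ∉ B ∧ (e : ℕ) ∈ B') ∧
      (v e = -1 → (e : ℕ) ∈ B ∧ (e : ℕ) ∉ B') := by
  have he := congrFun h e
  simp only [Pi.add_apply, basisVector] at he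
  rcases Classical.em ((e : ℕ) ∈ B) with h1 | h1 <;>
    rcases Classical.em ((e : ℕ) ∈ B') with h2 | h2
  · have hv : v e = 0 := by simp [h1, h2] at he; linarith
    exact ⟨fun _ => iff_of_true h1 h2, fun hx => by rw [hv] at hx; norm_num at hx,
      fun hx => by rw [hv] at hx; norm_num at hx⟩
  · have hv : v e = -1 := by simp [h1, h2] at he; linarith
    exact ⟨fun hx => by rw [hv] at hx; norm_num at hx,
      fun hx => by rw [hv] at hx; norm_num at hx, fun _ => ⟨h1, h2⟩⟩
  · have hv : v e = 1 := by simp [h1, h2] at he; linarith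
    exact ⟨fun hx => by rw [hv] at hx; norm_num at hx, fun _ => ⟨h1, h2⟩,
      fun hx => by rw [hv] at hx; norm_num at hx⟩
  · have hv : v e = 0 := by simp [h1, h2] at he; linarith
    exact ⟨fun _ => iff_of_false h1 h2, fun hx => by rw [hv] at hx; norm_num at hx,
      fun hx => by rw [hv] at hx; norm_num at hx⟩

end Aux
lemma basisVector01 (E : Finset ℕ) (B : Finset ℕ) (i : ↑E) :
    basisVector E B i = 0 ∨ basisVector E B i = 1 := by
  by_cases h : (i : ℕ) ∈ B <;> simp [basisVector, h]

lemma coloops_subset {E : Finset ℕ} {ℬ : Finset (Finset ℕ)} {B : Finset ℕ} (hB : B ∈ ℬ) :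
    coloopsOf E ℬ ⊆ B := fun a ha => (Finset.mem_filter.1 ha).2 B hB

lemma main_iff (E : Finset ℕ) (ℬM ℬN : Finset (Finset ℕ))
    (hM : IsBasisFamily E ℬM) (hN : IsBasisFamily E ℬN) :
    (∃ v : ↑E → ℝ, basePolytope E ℬN = (fun x => v + x) '' basePolytope E ℬM) ↔
      (loopsOf E ℬM ∪ coloopsOf E ℬM = loopsOf E ℬN ∪ coloopsOf E ℬN ∧
        ℬM.image (fun B => B \ coloopsOf E ℬM)
          = ℬN.image (fun B => B \ coloopsOf E ℬN)) := by
  constructor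
  · rintro ⟨v, hv⟩
    set SM : Finset (↑E → ℝ) := ℬM.image (basisVector E) with hSM
    set SN : Finset (↑E → ℝ) := ℬN.image (basisVector E) with hSN
    have h01M : ∀ p ∈ SM, ∀ i, p i = 0 ∨ p i = 1 := by
      intro p hp i
      obtain ⟨B, _, rfl⟩ := Finset.mem_image.1 hp
      exact basisVector01 E B i
    have h01N : ∀ p ∈ SN, ∀ i, p i = 0 ∨ p i = 1 := by
      intro p hp i
      obtain ⟨B, _, rfl⟩ := Finset.mem_image.1 hp
      exact basisVector01 E B i
    simp only [basePolytope] at hv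
    rw [image_translate_hull, ← Finset.coe_image, ← Finset.coe_image, ← hSM, ← hSN] at hv
    -- hv : convexHull ↑SN = convexHull ((v+·) '' ↑SM)
    have hmemN : ∀ B' ∈ ℬN, basisVector E B' - v ∈ convexHull ℝ (↑SM : Set (↑E → ℝ)) := by
      intro B' hB'
      have h1 : basisVector E B' ∈ convexHull ℝ ((fun x => v + x) '' ↑SM) := by
        rw [← hv]
        exact subset_convexHull ℝ _ (Finset.mem_coe.2 (Finset.mem_image_of_mem _ hB'))
      rw [← image_translate_hull] at h1
      obtain ⟨y, hy, hvy⟩ := h1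
      have hy' : y = basisVector E B' - v := eq_sub_of_add_eq' hvy
      rwa [hy'] at hy
    have hmemM : ∀ B ∈ ℬM, v + basisVector E B ∈ convexHull ℝ (↑SN : Set (↑E → ℝ)) := by
      intro B hB
      rw [hv, ← image_translate_hull]
      exact ⟨basisVector E B,
        subset_convexHull ℝ _ (Finset.mem_coe.2 (Finset.mem_image_of_mem _ hB)), rfl⟩
    have hcoordN : ∀ (e : ↑E), ∀ B' ∈ ℬN,
        basisVector E B' e - v e = 0 ∨ basisVector E B' e - v e = 1 := by
      intro e B' hB'
      obtain ⟨B0, hB0⟩ := hM.1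
      by_cases hc : ∀ B ∈ ℬM, basisVector E B e = basisVector E B0 e
      · have hb : ∀ p ∈ SM, basisVector E B0 e ≤ p e ∧ p e ≤ basisVector E B0 e := by
          intro p hp
          obtain ⟨B, hB, rfl⟩ := Finset.mem_image.1 hp
          rw [hc B hB]; exact ⟨le_rfl, le_rfl⟩
        have hcb := coord_bounds SM _ (hmemN B' hB') e _ _ hb
        have heq : basisVector E B' e - v e = basisVector E B0 e :=
          le_antisymm hcb.2 hcb.1
        rw [heq]; exact basisVector01 E B0 e
      · push_neg at hc
        obtain ⟨B1, hB1, hne⟩ := hc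
        have hbox : ∀ p ∈ SN, (0:ℝ) ≤ p e ∧ p e ≤ 1 := by
          intro p hp; rcases h01N p hp e with h | h <;> simp [h]
        have hb0 := coord_bounds SN _ (hmemM B0 hB0) e 0 1 hbox
        have hb1 := coord_bounds SN _ (hmemM B1 hB1) e 0 1 hbox
        simp only [Pi.add_apply] at hb0 hb1
        have hv0 : v e = 0 := by
          rcases basisVector01 E B0 e with q0 | q0 <;> rcases basisVector01 E B1 e with q1 | q1
          · exact absurd (q1.trans q0.symm) hne
          · rw [q0] at hb0; rw [q1] at hb1; linarith [hb0.1, hb1.2]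
          · rw [q0] at hb0; rw [q1] at hb1; linarith [hb0.2, hb1.1]
          · exact absurd (q1.trans q0.symm) hne
        rw [hv0, sub_zero]
        exact basisVector01 E B' e
    have hcoordM : ∀ (e : ↑E), ∀ B ∈ ℬM,
        v e + basisVector E B e = 0 ∨ v e + basisVector E B e = 1 := by
      intro e B hB
      obtain ⟨B0', hB0'⟩ := hN.1
      by_cases hc : ∀ B' ∈ ℬN, basisVector E B' e = basisVector E B0' e
      · have hb : ∀ p ∈ SN, basisVector E B0' e ≤ p e ∧ p e ≤ basisVector E B0' e := by
          intro p hp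
          obtain ⟨B', hB', rfl⟩ := Finset.mem_image.1 hp
          rw [hc B' hB']; exact ⟨le_rfl, le_rfl⟩
        have hcb := coord_bounds SN _ (hmemM B hB) e _ _ hb
        simp only [Pi.add_apply] at hcb
        have heq : v e + basisVector E B e = basisVector E B0' e :=
          le_antisymm hcb.2 hcb.1
        rw [heq]; exact basisVector01 E B0' e
      · push_neg at hc
        obtain ⟨B1', hB1', hne⟩ := hc
        have hbox : ∀ p ∈ SM, (0:ℝ) ≤ p e ∧ p e ≤ 1 := by
          intro p hp; rcases h01M p hp e with h | h <;> simp [h]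
        have hb0 := coord_bounds SM _ (hmemN B0' hB0') e 0 1 hbox
        have hb1 := coord_bounds SM _ (hmemN B1' hB1') e 0 1 hbox
        simp only [Pi.sub_apply] at hb0 hb1
        have hv0 : v e = 0 := by
          rcases basisVector01 E B0' e with q0 | q0 <;>
            rcases basisVector01 E B1' e with q1 | q1
          · exact absurd (q1.trans q0.symm) hne
          · rw [q0] at hb0; rw [q1] at hb1; linarith [hb0.2, hb1.1]
          · rw [q0] at hb0; rw [q1] at hb1; linarith [hb0.1, hb1.2]
          · exact absurd (q1.trans q0.symm) hne
        rw [hv0, zero_add]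
        exact basisVector01 E B e
    have fwd : ∀ B' ∈ ℬN, ∃ B ∈ ℬM, basisVector E B' = v + basisVector E B := by
      intro B' hB'
      have hx := extreme01 SM h01M (basisVector E B' - v)
        (fun i => hcoordN i B' hB') (hmemN B' hB')
      obtain ⟨B, hB, hBe⟩ := Finset.mem_image.1 hx
      exact ⟨B, hB, by rw [hBe]; abel⟩
    have bwd : ∀ B ∈ ℬM, ∃ B' ∈ ℬN, basisVector E B' = v + basisVector E B := by
      intro B hB
      have hx := extreme01 SN h01N (v + basisVector E B)
        (fun i => hcoordM i B hB) (hmemM B hB)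
      obtain ⟨B', hB', hBe⟩ := Finset.mem_image.1 hx
      exact ⟨B', hB', hBe⟩
    have hv3 : ∀ e : ↑E, v e = -1 ∨ v e = 0 ∨ v e = 1 := by
      intro e
      obtain ⟨B0', hB0'⟩ := hN.1
      rcases hcoordN e B0' hB0' with h | h <;> rcases basisVector01 E B0' e with q | q <;>
        rw [q] at h
      · right; left; linarith
      · right; right; linarith
      · left; linarith
      · right; left; linarith
    -- per-element consequences
    have Hm1 : ∀ e : ↑E, v e = -1 → (e : ℕ) ∈ coloopsOf E ℬM ∧ (e : ℕ) ∈ loopsOf E ℬN := by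
      intro e he
      constructor
      · refine Finset.mem_filter.2 ⟨e.2, fun B hB => ?_⟩
        obtain ⟨B', hB', hEq⟩ := bwd B hB
        exact ((match_mem hEq e).2.2 he).1
      · refine Finset.mem_filter.2 ⟨e.2, fun B' hB' => ?_⟩
        obtain ⟨B, hB, hEq⟩ := fwd B' hB'
        exact ((match_mem hEq e).2.2 he).2
    have Hp1 : ∀ e : ↑E, v e = 1 → (e : ℕ) ∈ loopsOf E ℬM ∧ (e : ℕ) ∈ coloopsOf E ℬN := by
      intro e he
      constructor
      · refine Finset.mem_filter.2 ⟨e.2, fun B hB => ?_⟩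
        obtain ⟨B', hB', hEq⟩ := bwd B hB
        exact ((match_mem hEq e).2.1 he).1
      · refine Finset.mem_filter.2 ⟨e.2, fun B' hB' => ?_⟩
        obtain ⟨B, hB, hEq⟩ := fwd B' hB'
        exact ((match_mem hEq e).2.1 he).2
    have H0 : ∀ e : ↑E, v e = 0 →
        (((e : ℕ) ∈ loopsOf E ℬM ↔ (e : ℕ) ∈ loopsOf E ℬN) ∧
          ((e : ℕ) ∈ coloopsOf E ℬM ↔ (e : ℕ) ∈ coloopsOf E ℬN)) := by
      intro e he
      constructor
      · constructor
        · intro hl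
          refine Finset.mem_filter.2 ⟨e.2, fun B' hB' => ?_⟩
          obtain ⟨B, hB, hEq⟩ := fwd B' hB'
          exact fun hx => (Finset.mem_filter.1 hl).2 B hB (((match_mem hEq e).1 he).2 hx)
        · intro hl
          refine Finset.mem_filter.2 ⟨e.2, fun B hB => ?_⟩
          obtain ⟨B', hB', hEq⟩ := bwd B hB
          exact fun hx => (Finset.mem_filter.1 hl).2 B' hB' (((match_mem hEq e).1 he).1 hx)
      · constructor
        · intro hl
          refine Finset.mem_filter.2 ⟨e.2, fun B' hB' => ?_⟩
          obtain ⟨B, hB, hEq⟩ := fwd B' hB'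
          exact ((match_mem hEq e).1 he).1 ((Finset.mem_filter.1 hl).2 B hB)
        · intro hl
          refine Finset.mem_filter.2 ⟨e.2, fun B hB => ?_⟩
          obtain ⟨B', hB', hEq⟩ := bwd B hB
          exact ((match_mem hEq e).1 he).2 ((Finset.mem_filter.1 hl).2 B' hB')
    constructor
    · apply Finset.ext
      intro a
      by_cases haE : a ∈ E
      · set e : ↑E := ⟨a, haE⟩
        simp only [Finset.mem_union]
        rcases hv3 e with h | h | h
        · exact ⟨fun _ => Or.inl (Hm1 e h).2, fun _ => Or.inr (Hm1 e h).1⟩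
        · rw [(H0 e h).1, (H0 e h).2]
        · exact ⟨fun _ => Or.inr (Hp1 e h).2, fun _ => Or.inl (Hp1 e h).1⟩
      · simp [loopsOf, coloopsOf, haE]
    · apply Finset.ext
      intro S
      simp only [Finset.mem_image]
      constructor
      · rintro ⟨B, hB, rfl⟩
        obtain ⟨B', hB', hEq⟩ := bwd B hB
        refine ⟨B', hB', ?_⟩
        apply Finset.ext
        intro a
        simp only [Finset.mem_sdiff]
        by_cases haE : a ∈ E
        · set e : ↑E := ⟨a, haE⟩
          rcases hv3 e with h | h | h
          · have h1 := (match_mem hEq e).2.2 h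
            have h2 := (Hm1 e h).1
            exact iff_of_false (fun hx => h1.2 hx.1) (fun hx => hx.2 h2)
          · have hBB := (match_mem hEq e).1 h
            have hCC := (H0 e h).2
            constructor
            · rintro ⟨x1, x2⟩
              exact ⟨hBB.2 x1, fun hc => x2 (hCC.1 hc)⟩
            · rintro ⟨x1, x2⟩
              exact ⟨hBB.1 x1, fun hc => x2 (hCC.2 hc)⟩
          · have h1 := (match_mem hEq e).2.1 h
            have h2 := (Hp1 e h).2
            exact iff_of_false (fun hx => hx.2 h2) (fun hx => h1.1 hx.1)
        · exact iff_of_false (fun hx => haE (hN.2.1 B' hB' hx.1))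
            (fun hx => haE (hM.2.1 B hB hx.1))
      · rintro ⟨B', hB', rfl⟩
        obtain ⟨B, hB, hEq⟩ := fwd B' hB'
        refine ⟨B, hB, ?_⟩
        apply Finset.ext
        intro a
        simp only [Finset.mem_sdiff]
        by_cases haE : a ∈ E
        · set e : ↑E := ⟨a, haE⟩
          rcases hv3 e with h | h | h
          · have h1 := (match_mem hEq e).2.2 h
            have h2 := (Hm1 e h).1
            exact iff_of_false (fun hx => hx.2 h2) (fun hx => h1.2 hx.1)
          · have hBB := (match_mem hEq e).1 h
            have hCC := (H0 e h).2
            constructor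
            · rintro ⟨x1, x2⟩
              exact ⟨hBB.1 x1, fun hc => x2 (hCC.2 hc)⟩
            · rintro ⟨x1, x2⟩
              exact ⟨hBB.2 x1, fun hc => x2 (hCC.1 hc)⟩
          · have h1 := (match_mem hEq e).2.1 h
            have h2 := (Hp1 e h).2
            exact iff_of_false (fun hx => h1.1 hx.1) (fun hx => hx.2 h2)
        · exact iff_of_false (fun hx => haE (hM.2.1 B hB hx.1))
            (fun hx => haE (hN.2.1 B' hB' hx.1))
  · rintro ⟨-, himg⟩
    refine ⟨fun e => (if (e : ℕ) ∈ coloopsOf E ℬN then (1:ℝ) else 0) -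
      (if (e : ℕ) ∈ coloopsOf E ℬM then (1:ℝ) else 0), ?_⟩
    simp only [basePolytope]
    rw [image_translate_hull]
    have hset : basisVector E '' (↑ℬN : Set (Finset ℕ)) =
        (fun x => (fun e : ↑E => (if (e : ℕ) ∈ coloopsOf E ℬN then (1:ℝ) else 0) -
          (if (e : ℕ) ∈ coloopsOf E ℬM then (1:ℝ) else 0)) + x) ''
          (basisVector E '' (↑ℬM : Set (Finset ℕ))) := by
      apply Set.eq_of_subset_of_subset
      · rintro p ⟨B', hB', rfl⟩
        have h1 : B' \ coloopsOf E ℬN ∈ ℬM.image (fun B => B \ coloopsOf E ℬM) := by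
          rw [himg]; exact Finset.mem_image_of_mem _ hB'
        obtain ⟨B, hB, hBB⟩ := Finset.mem_image.1 h1
        refine ⟨basisVector E B, ⟨B, hB, rfl⟩, ?_⟩
        funext e
        exact (mem_shift (coloops_subset hB) (coloops_subset hB') hBB e).symm
      · rintro p ⟨q, ⟨B, hB, rfl⟩, rfl⟩
        have h1 : B \ coloopsOf E ℬM ∈ ℬN.image (fun B => B \ coloopsOf E ℬN) := by
          rw [← himg]; exact Finset.mem_image_of_mem _ hB
        obtain ⟨B', hB', hBB⟩ := Finset.mem_image.1 h1
        refine ⟨B', hB', ?_⟩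
        funext e
        exact mem_shift (coloops_subset hB) (coloops_subset hB') hBB.symm e
    rw [hset]
/-- Let `M` and `N` be matroids on the same finite ground set `E`.
Then `P(N)` is a translate of `P(M)` iff `loops(M) ∪ coloops(M) = loops(N) ∪ coloops(N)`
and the matroids obtained by deleting all loops and contracting all coloops (whose bases
are the sets `B ∖ coloops`, `B` a basis) coincide. In particular, if `M` has no loops
and no coloops then `P(M)` is the unique base polytope of a matroid in its translation
class. -/
theorem statement10 (E : Finset ℕ) (ℬM ℬN : Finset (Finset ℕ))
    (hM : IsBasisFamily E ℬM) (hN : IsBasisFamily E ℬN) :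
    ((∃ v : ↑E → ℝ, basePolytope E ℬN = (fun x => v + x) '' basePolytope E ℬM) ↔
      (loopsOf E ℬM ∪ coloopsOf E ℬM = loopsOf E ℬN ∪ coloopsOf E ℬN ∧
        ℬM.image (fun B => B \ coloopsOf E ℬM)
          = ℬN.image (fun B => B \ coloopsOf E ℬN))) ∧
    (loopsOf E ℬM = ∅ → coloopsOf E ℬM = ∅ →
      ∀ ℬ' : Finset (Finset ℕ), IsBasisFamily E ℬ' →
        (∃ v : ↑E → ℝ, basePolytope E ℬ' = (fun x => v + x) '' basePolytope E ℬM) →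
        basePolytope E ℬ' = basePolytope E ℬM) := by
  refine ⟨main_iff E ℬM ℬN hM hN, ?_⟩
  intro hl hc ℬ' hB' htr
  obtain ⟨heq, himg⟩ := (main_iff E ℬM ℬ' hM hB').1 htr
  have hcol' : coloopsOf E ℬ' = ∅ := by
    have h0 : loopsOf E ℬ' ∪ coloopsOf E ℬ' = ∅ := by
      rw [← heq, hl, hc]; simp
    exact (Finset.union_eq_empty.1 h0).2
  have hBeq : ℬM = ℬ' := by
    have h1 : ℬM.image (fun B => B \ coloopsOf E ℬM) = ℬM := by
      rw [hc]; simp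
    have h2 : ℬ'.image (fun B => B \ coloopsOf E ℬ') = ℬ' := by
      rw [hcol']; simp
    rw [h1, h2] at himg
    exact himg
  rw [← hBeq]
end GPoly
end

section
/- Let E be a finite set with a linear ordering <, let 0 ≤ r ≤ |E|, and let U = {u_1 < … < u_r} be an r-element subset of E. Then the family 𝔅 = { B ⊆ E : |B| = r and u_ℓ ≤ b_ℓ for all ℓ, where B = {b_1 < … < b_r} } is the collection of bases of a matroid on E; that is, 𝔅 is nonempty and satisfies the basis exchange property: for all B_1, B_2 ∈ 𝔅 and every x ∈ B_1 ∖ B_2 there exists y ∈ B_2 ∖ B_1 with (B_1 ∖ {x}) ∪ {y} ∈ 𝔅. -/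
open scoped Classical

namespace GPoly

/-!
For sets of equal size, `U ≤ B` in the Gale order iff, for every `t`, `B` has at least as
many elements `≥ t` as `U` has. Given `x ∈ B₁ \ B₂`, exchange it for the largest element `y`
of `B₂ \ B₁`. For `t ≤ y` the exchange does not lower the count of elements `≥ t` in `B₁`;
for `t > y` every element `≥ t` of `B₂` already lies in `B₁ \ {x}`. So each count of the new
set dominates that of `B₁` or of `B₂`, hence that of `U`.
-/

section GaleOrder

open Finset

variable {α : Type*}

theorem countP_le_countP_of_forall₂ [Preorder α] [DecidableLE α] (t : α) {u b : List α}
    (h : List.Forall₂ (· ≤ ·) u b) : u.countP (t ≤ ·) ≤ b.countP (t ≤ ·) := by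
  induction h with
  | nil => rfl
  | @cons a c u b hac _ ih =>
    simp only [List.countP_cons, decide_eq_true_eq]
    by_cases hta : t ≤ a
    · simp only [hta, hta.trans hac, if_true]
      omega
    · simp only [hta, if_false]
      omega

variable [LinearOrder α]

theorem forall₂_of_countP_le_countP :
    ∀ {u b : List α}, u.Pairwise (· ≤ ·) → b.Pairwise (· ≤ ·) → u.length = b.length →
      (∀ t, u.countP (t ≤ ·) ≤ b.countP (t ≤ ·)) → List.Forall₂ (· ≤ ·) u b
  | [], [], _, _, _, _ => .nil
  | a :: u, c :: b, hu, hb, hlen, hcount => by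
    rw [List.pairwise_cons] at hu hb
    have hlen : u.length = b.length := by simpa using hlen
    have countP_eq_length_of_le {l : List α} {s : α} (hl : ∀ z ∈ l, s ≤ z) :
        l.countP (s ≤ ·) = l.length :=
      List.countP_eq_length.2 fun z hz => by simpa using hl z hz
    have hac : a ≤ c := by
      by_contra! hca
      have h := hcount a
      simp only [List.countP_cons, decide_eq_true_eq, le_refl, not_le.2 hca, if_true,
        if_false, countP_eq_length_of_le hu.1] at h
      have := List.countP_le_length (p := (a ≤ ·)) (l := b)
      omega
    refine .cons hac (forall₂_of_countP_le_countP hu.2 hb.2 hlen fun t => ?_)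
    have h := hcount t
    simp only [List.countP_cons, decide_eq_true_eq] at h
    by_cases hta : t ≤ a
    · simp only [hta, hta.trans hac, if_true] at h
      omega
    by_cases htc : t ≤ c
    · calc u.countP (t ≤ ·) ≤ u.length := List.countP_le_length
        _ = b.countP (t ≤ ·) := by
          rw [hlen, countP_eq_length_of_le fun z hz => htc.trans (hb.1 z hz)]
    · simp only [hta, htc, if_false] at h
      omega

theorem card_filter_eq_countP_sort (p : α → Prop) [DecidablePred p] (S : Finset α) :
    #(S.filter p) = (S.sort (· ≤ ·)).countP (p ·) := by
  rw [← Multiset.coe_countP, Finset.sort_eq, Multiset.countP_eq_card_filter]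
  rfl

theorem galeLe_iff_card_filter_le {U B : Finset α} (hcard : #U = #B) :
    galeLe U B ↔ ∀ t, #(U.filter (t ≤ ·)) ≤ #(B.filter (t ≤ ·)) := by
  simp only [card_filter_eq_countP_sort]
  refine ⟨fun h t => countP_le_countP_of_forall₂ t h, fun h => ?_⟩
  exact forall₂_of_countP_le_countP (U.pairwise_sort _) (B.pairwise_sort _)
    (by simp [hcard]) h

theorem card_filter_le_exchange {B₁ B₂ : Finset α} {x y : α} (hx : x ∉ B₂) (hy : y ∉ B₁)
    (hy_max : ∀ z ∈ B₂ \ B₁, z ≤ y) (t : α) :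
    min #(B₁.filter (t ≤ ·)) #(B₂.filter (t ≤ ·)) ≤
      #((insert y (B₁.erase x)).filter (t ≤ ·)) := by
  rw [filter_insert, filter_erase]
  split_ifs with hty
  · refine min_le_of_left_le ?_
    rw [card_insert_of_notMem fun h => hy (mem_filter.1 (mem_of_mem_erase h)).1]
    have := pred_card_le_card_erase (s := B₁.filter (t ≤ ·)) (a := x)
    omega
  · refine min_le_of_right_le (card_le_card fun z hz => ?_)
    rw [mem_filter] at hz
    have hzB₁ : z ∈ B₁ := by
      by_contra hzB₁
      exact hty (hz.2.trans (hy_max z (mem_sdiff.2 ⟨hz.1, hzB₁⟩)))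
    exact mem_erase.2 ⟨fun hzx => hx (hzx ▸ hz.1), mem_filter.2 ⟨hzB₁, hz.2⟩⟩

end GaleOrder

theorem statement15_general (α : Type) [Fintype α] [LinearOrder α] (r : ℕ)
    (U : Finset α) (hU : U.card = r) :
    (Finset.univ.powerset.filter fun B : Finset α => B.card = r ∧ galeLe U B).Nonempty ∧
    ∀ B₁ ∈ Finset.univ.powerset.filter fun B : Finset α => B.card = r ∧ galeLe U B,
      ∀ B₂ ∈ Finset.univ.powerset.filter fun B : Finset α => B.card = r ∧ galeLe U B,
        ∀ x ∈ B₁ \ B₂,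
          ∃ y ∈ B₂ \ B₁,
            insert y (B₁.erase x) ∈
              Finset.univ.powerset.filter fun B : Finset α => B.card = r ∧ galeLe U B := by
  have mem_bases (B : Finset α) :
      B ∈ Finset.univ.powerset.filter (fun B => B.card = r ∧ galeLe U B) ↔
        B.card = r ∧ galeLe U B := by
    simp
  refine ⟨⟨U, (mem_bases U).2 ⟨hU, (galeLe_iff_card_filter_le rfl).2 fun _ => le_rfl⟩⟩, ?_⟩
  simp only [mem_bases]
  rintro B₁ ⟨hB₁, hUB₁⟩ B₂ ⟨hB₂, hUB₂⟩ x hx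
  rw [Finset.mem_sdiff] at hx
  have hne : (B₂ \ B₁).Nonempty :=
    Finset.sdiff_nonempty.2 fun h => hx.2 (Finset.eq_of_subset_of_card_le h (by omega) ▸ hx.1)
  set y := (B₂ \ B₁).max' hne
  have hy : y ∈ B₂ \ B₁ := Finset.max'_mem _ _
  have hyB₁ : y ∉ B₁ := (Finset.mem_sdiff.1 hy).2
  have hcard : (insert y (B₁.erase x)).card = r := by
    rw [Finset.card_insert_of_notMem fun h => hyB₁ (Finset.mem_of_mem_erase h),
      Finset.card_erase_add_one hx.1, hB₁]
  refine ⟨y, hy, hcard, (galeLe_iff_card_filter_le (hU.trans hcard.symm)).2 fun t => ?_⟩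
  calc (U.filter (t ≤ ·)).card
      ≤ min (B₁.filter (t ≤ ·)).card (B₂.filter (t ≤ ·)).card :=
        le_min ((galeLe_iff_card_filter_le (hU.trans hB₁.symm)).1 hUB₁ t)
          ((galeLe_iff_card_filter_le (hU.trans hB₂.symm)).1 hUB₂ t)
    _ ≤ ((insert y (B₁.erase x)).filter (t ≤ ·)).card :=
        card_filter_le_exchange hx.2 hyB₁ (fun z hz => Finset.le_max' _ z hz) t

/-- Let `E` be a finite linearly ordered set (here, the type `α`),
`0 ≤ r ≤ |E|`, and let `U` be an `r`-element subset of `E`. Then the family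
`𝔅 = {B ⊆ E : |B| = r and U ≤ B in the Gale order}` is the collection of bases of a
matroid on `E`: it is nonempty and satisfies the basis exchange property. -/
theorem statement15 (α : Type) [Fintype α] [LinearOrder α] (r : ℕ)
    (hr : r ≤ Fintype.card α) (U : Finset α) (hU : U.card = r) :
    (Finset.univ.powerset.filter fun B : Finset α => B.card = r ∧ galeLe U B).Nonempty ∧
    ∀ B₁ ∈ Finset.univ.powerset.filter fun B : Finset α => B.card = r ∧ galeLe U B,
      ∀ B₂ ∈ Finset.univ.powerset.filter fun B : Finset α => B.card = r ∧ galeLe U B,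
        ∀ x ∈ B₁ \ B₂,
          ∃ y ∈ B₂ \ B₁,
            insert y (B₁.erase x) ∈
              Finset.univ.powerset.filter fun B : Finset α => B.card = r ∧ galeLe U B :=
  statement15_general α r U hU
end GPoly
end
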